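/- arXiv:2106.05334 — 10 statements merged into one kernel-verified Lean document; each statement's English description precedes it below -/
import Mathlib

section
/- Let C and D be categories and let F₀ : D ⥤ C and G₀ : C ⥤ D form an adjunction F₀ ⊣ G₀, and let F : σD ⥤ σC and G : σC ⥤ σD be the induced functors on categories of difference objects (postcomposition with F₀ and G₀). If G₀ is monadic, then G is monadic. -/
/-!
An algebra for the monad of the whiskered adjunction `J ⥤ D ⇄ J ⥤ C` is the same thing as a
functor from `J` to the algebras of the original monad, the structure map being given pointwise.
Under this identification the comparison functor of the whiskered adjunction becomes the
whiskering of the comparison functor of the original adjunction, and whiskering preserves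
equivalences.
-/

open CategoryTheory

namespace CategoryTheory.Adjunction

universe v₁ v₂ v₃ u₁ u₂ u₃

variable {C : Type u₁} {D : Type u₂} [Category.{v₁} C] [Category.{v₂} D] {L : C ⥤ D} {R : D ⥤ C}
  (adj : L ⊣ R) (J : Type u₃) [Category.{v₃} J]

lemma whiskerRight_toMonad_η_app_app (X : J ⥤ C) (j : J) :
    ((adj.whiskerRight J).toMonad.η.app X).app j = adj.toMonad.η.app (X.obj j) :=
  (Category.id_comp _).trans (Category.comp_id _)

lemma whiskerRight_toMonad_μ_app_app (X : J ⥤ C) (j : J) :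
    ((adj.whiskerRight J).toMonad.μ.app X).app j = adj.toMonad.μ.app (X.obj j) :=
  R.congr_map ((Category.id_comp _).trans (Category.comp_id _))

lemma whiskerRight_toMonad_map_app {X Y : J ⥤ C} (f : X ⟶ Y) (j : J) :
    ((adj.whiskerRight J).toMonad.map f).app j = adj.toMonad.map (f.app j) :=
  rfl

lemma comparison_whiskerRight_obj_a_app (X : J ⥤ D) (j : J) :
    ((Monad.comparison (adj.whiskerRight J)).obj X).a.app j =
      ((Monad.comparison adj).obj (X.obj j)).a :=
  R.congr_map ((Category.id_comp _).trans (Category.comp_id _))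

def whiskerRightAlgebraToFunctor :
    (adj.whiskerRight J).toMonad.Algebra ⥤ (J ⥤ adj.toMonad.Algebra) where
  obj B :=
    { obj j :=
        { A := B.A.obj j
          a := B.a.app j
          unit := by
            have := congr_app B.unit j
            simp only [NatTrans.comp_app, whiskerRight_toMonad_η_app_app] at this
            exact this
          assoc := by
            have := congr_app B.assoc j
            simp only [NatTrans.comp_app, whiskerRight_toMonad_μ_app_app,
              whiskerRight_toMonad_map_app] at this
            exact this }
      map φ := { f := B.A.map φ, h := B.a.naturality φ } }
  map f :=
    { app j :=
        { f := f.f.app j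
          h := by
            have := congr_app f.h j
            simp only [NatTrans.comp_app, whiskerRight_toMonad_map_app] at this
            exact this } }

def functorToWhiskerRightAlgebra :
    (J ⥤ adj.toMonad.Algebra) ⥤ (adj.whiskerRight J).toMonad.Algebra where
  obj P :=
    { A := P ⋙ Monad.forget _
      a := { app j := (P.obj j).a, naturality _ _ φ := (P.map φ).h }
      unit := by
        ext j
        simp only [NatTrans.comp_app, whiskerRight_toMonad_η_app_app]
        exact (P.obj j).unit
      assoc := by
        ext j
        simp only [NatTrans.comp_app, whiskerRight_toMonad_μ_app_app,
          whiskerRight_toMonad_map_app]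
        exact (P.obj j).assoc }
  map f :=
    { f := Functor.whiskerRight f (Monad.forget _)
      h := by
        ext j
        simp only [NatTrans.comp_app, whiskerRight_toMonad_map_app]
        exact (f.app j).h }

-- Both round trips are the identity up to η-conversion of structures, hence `Iso.refl`.
def whiskerRightAlgebraEquiv :
    (adj.whiskerRight J).toMonad.Algebra ≌ (J ⥤ adj.toMonad.Algebra) :=
  .mk (whiskerRightAlgebraToFunctor adj J) (functorToWhiskerRightAlgebra adj J)
    (Iso.refl _) (Iso.refl _)

def comparisonWhiskerRightCompIso :
    Monad.comparison (adj.whiskerRight J) ⋙ whiskerRightAlgebraToFunctor adj J ≅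
      (Functor.whiskeringRight J D _).obj (Monad.comparison adj) :=
  NatIso.ofComponents
    (fun X => NatIso.ofComponents
      (fun j => Monad.Algebra.isoMk (Iso.refl _) (by
        erw [Functor.map_id, Category.id_comp, Category.comp_id]
        exact (comparison_whiskerRight_obj_a_app adj J X j).symm))
      (fun _ => by ext; exact (Category.comp_id _).trans (Category.id_comp _).symm))
    (fun _ => by ext; exact (Category.comp_id _).trans (Category.id_comp _).symm)

instance isEquivalence_comparison_whiskerRight [(Monad.comparison adj).IsEquivalence] :
    (Monad.comparison (adj.whiskerRight J)).IsEquivalence :=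
  have := Functor.isEquivalence_of_iso (comparisonWhiskerRightCompIso adj J).symm
  have : (whiskerRightAlgebraToFunctor adj J).IsEquivalence :=
    (whiskerRightAlgebraEquiv adj J).isEquivalence_functor
  Functor.isEquivalence_of_comp_right _ (whiskerRightAlgebraToFunctor adj J)

end CategoryTheory.Adjunction

instance CategoryTheory.monadicRightAdjoint_whiskeringRight {C D : Type*} [Category C]
    [Category D] (J : Type*) [Category J] (G : C ⥤ D) [MonadicRightAdjoint G] :
    MonadicRightAdjoint ((Functor.whiskeringRight J C D).obj G) where
  L := (Functor.whiskeringRight J D C).obj (monadicLeftAdjoint G)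
  adj := (monadicAdjunction G).whiskerRight J
  eqv := inferInstance

theorem difference_monadic_general {C : Type*} {D : Type*} [Category C] [Category D]
    (G₀ : C ⥤ D) [MonadicRightAdjoint G₀] :
    Nonempty
      (MonadicRightAdjoint ((Functor.whiskeringRight (SingleObj (Multiplicative ℕ)) C D).obj G₀)) :=
  ⟨inferInstance⟩

theorem difference_monadic {C : Type*} {D : Type*} [Category C] [Category D]
    (F₀ : D ⥤ C) (G₀ : C ⥤ D) (adj : F₀ ⊣ G₀) [MonadicRightAdjoint G₀] :
    Nonempty
      (MonadicRightAdjoint ((Functor.whiskeringRight (SingleObj (Multiplicative ℕ)) C D).obj G₀)) :=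
  difference_monadic_general G₀
end

section
/- Let C be a category in which every slice category has countable products (equivalently, C has countable wide pullbacks). Then for every difference object (S, σ_S) of σC, the functor from the slice category of σC over (S, σ_S) to the slice category of C over S induced by the forgetful functor |·| : σC ⥤ C admits a right adjoint. -/
/-!
The right adjoint sends `p : Y ⟶ |S|` to the object of "σ-sequences in `Y`": generalised points
`(s, (yₙ)ₙ)` with `p yₙ = σⁿ s`. It is the product, in the slice over `|S|`, of the pullbacks of
`p` along the iterates `σⁿ`, with endomorphism `(s, (yₙ)) ↦ (σ s, (yₙ₊₁))`. Reading off `y₀` is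
the counit: an equivariant map into it must be `x ↦ (f x, (u (σⁿ x)))ₙ`, so it is determined by
its `0`-th component `u`.
-/

open CategoryTheory CategoryTheory.Limits

namespace CategoryTheory

variable {C : Type*} [Category C]

theorem Limits.hasPullbacks_of_hasBinaryProducts_over [∀ X : C, HasBinaryProducts (Over X)] :
    HasPullbacks C :=
  @hasPullbacks_of_hasLimit_cospan C _ fun {_ _ _} f g =>
    (Over.isPullback_of_binaryFan_isLimit _ (prodIsProd (Over.mk f) (Over.mk g))).hasPullback

theorem End.pow_succ_eq_comp {X : C} (σ : End X) (n : ℕ) : σ ^ (n + 1) = σ ≫ σ ^ n := by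
  rw [pow_succ, End.mul_def]

theorem End.pow_comp_eq_comp_pow {X Y : C} {f : X ⟶ Y} {σ : End X} {τ : End Y}
    (h : σ ≫ f = f ≫ τ) (n : ℕ) : (σ ^ n : X ⟶ X) ≫ f = f ≫ (τ ^ n : Y ⟶ Y) := by
  induction n with
  | zero => rw [pow_zero, pow_zero, End.one_def, End.one_def, Category.id_comp, Category.comp_id]
  | succ n ih =>
    rw [End.pow_succ_eq_comp, End.pow_succ_eq_comp, Category.assoc, ih, ← Category.assoc, h,
      Category.assoc]

namespace Over

variable {B : C} (σ : End B) (Y : Over B) [HasPullbacks C] [HasProductsOfShape ℕ (Over B)]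

noncomputable def cofree : Over B :=
  ∏ᶜ fun n : ℕ => (Over.pullback (σ ^ n)).obj Y

namespace cofree

noncomputable def proj (n : ℕ) : cofree σ Y ⟶ (Over.pullback (σ ^ n)).obj Y :=
  Pi.π _ n

noncomputable def π (n : ℕ) : (cofree σ Y).left ⟶ Y.left :=
  (proj σ Y n).left ≫ pullback.fst _ _

theorem proj_left_comp_snd (n : ℕ) :
    (proj σ Y n).left ≫ pullback.snd Y.hom (σ ^ n) = (cofree σ Y).hom :=
  Over.w (proj σ Y n)

theorem π_comp_hom (n : ℕ) : π σ Y n ≫ Y.hom = (cofree σ Y).hom ≫ σ ^ n := by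
  rw [π, Category.assoc, pullback.condition, ← Category.assoc, proj_left_comp_snd]

theorem π_zero_comp_hom : π σ Y 0 ≫ Y.hom = (cofree σ Y).hom := by
  rw [π_comp_hom, pow_zero, End.one_def, Category.comp_id]

variable {σ Y}

theorem over_hom_ext {A : Over B} {f g : A ⟶ cofree σ Y}
    (h : ∀ n, f ≫ proj σ Y n = g ≫ proj σ Y n) : f = g :=
  Pi.hom_ext _ _ h

noncomputable def overLift {T : C} (t : T ⟶ B) (y : ℕ → (T ⟶ Y.left))
    (hy : ∀ n, y n ≫ Y.hom = t ≫ σ ^ n) : Over.mk t ⟶ cofree σ Y :=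
  Pi.lift fun n => Over.homMk (pullback.lift (y n) t (hy n)) (pullback.lift_snd _ _ _)

theorem overLift_proj {T : C} (t : T ⟶ B) (y : ℕ → (T ⟶ Y.left))
    (hy : ∀ n, y n ≫ Y.hom = t ≫ σ ^ n) (n : ℕ) :
    overLift t y hy ≫ proj σ Y n =
      Over.homMk (pullback.lift (y n) t (hy n)) (pullback.lift_snd _ _ _) :=
  Pi.lift_π _ n

noncomputable def lift {T : C} (t : T ⟶ B) (y : ℕ → (T ⟶ Y.left))
    (hy : ∀ n, y n ≫ Y.hom = t ≫ σ ^ n) : T ⟶ (cofree σ Y).left :=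
  (overLift t y hy).left

@[simp]
theorem lift_hom {T : C} (t : T ⟶ B) (y : ℕ → (T ⟶ Y.left))
    (hy : ∀ n, y n ≫ Y.hom = t ≫ σ ^ n) : lift t y hy ≫ (cofree σ Y).hom = t :=
  Over.w _

@[simp]
theorem lift_π {T : C} (t : T ⟶ B) (y : ℕ → (T ⟶ Y.left))
    (hy : ∀ n, y n ≫ Y.hom = t ≫ σ ^ n) (n : ℕ) : lift t y hy ≫ π σ Y n = y n := by
  rw [lift, π, ← Category.assoc, ← Over.comp_left, overLift_proj]
  exact pullback.lift_fst _ _ _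

theorem hom_ext {T : C} {f g : T ⟶ (cofree σ Y).left}
    (hhom : f ≫ (cofree σ Y).hom = g ≫ (cofree σ Y).hom) (hπ : ∀ n, f ≫ π σ Y n = g ≫ π σ Y n) :
    f = g := by
  have : (Over.homMk f : Over.mk (f ≫ (cofree σ Y).hom) ⟶ _) = Over.homMk g hhom.symm := by
    refine over_hom_ext fun n => Over.OverMorphism.ext (pullback.hom_ext ?_ ?_)
    · simpa only [Over.comp_left, Category.assoc, Over.homMk_left] using! hπ n
    · simpa only [Over.comp_left, Category.assoc, Over.homMk_left, proj_left_comp_snd]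
        using! hhom
  exact congrArg CommaMorphism.left this

variable (σ Y)

noncomputable def shift : End (cofree σ Y).left :=
  lift ((cofree σ Y).hom ≫ σ) (fun n => π σ Y (n + 1)) fun n => by
    rw [π_comp_hom, End.pow_succ_eq_comp, Category.assoc]

theorem shift_hom : shift σ Y ≫ (cofree σ Y).hom = (cofree σ Y).hom ≫ σ :=
  lift_hom _ _ _

theorem shift_π (n : ℕ) : shift σ Y ≫ π σ Y n = π σ Y (n + 1) :=
  lift_π _ _ _ n

theorem shift_pow_π_zero (n : ℕ) : (shift σ Y ^ n : End _) ≫ π σ Y 0 = π σ Y n := by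
  induction n with
  | zero => rw [pow_zero, End.one_def, Category.id_comp]
  | succ n ih => rw [End.pow_succ_eq_comp, Category.assoc, ih, shift_π]

variable {σ Y} {T : C} {τ : End T} {t : T ⟶ B}

noncomputable def corec (ht : τ ≫ t = t ≫ σ) (u : T ⟶ Y.left) (hu : u ≫ Y.hom = t) :
    T ⟶ (cofree σ Y).left :=
  lift t (fun n => (τ ^ n : T ⟶ T) ≫ u) fun n => by
    rw [Category.assoc, hu, End.pow_comp_eq_comp_pow ht]

theorem corec_hom (ht : τ ≫ t = t ≫ σ) (u : T ⟶ Y.left) (hu : u ≫ Y.hom = t) :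
    corec ht u hu ≫ (cofree σ Y).hom = t :=
  lift_hom _ _ _

theorem corec_π (ht : τ ≫ t = t ≫ σ) (u : T ⟶ Y.left) (hu : u ≫ Y.hom = t) (n : ℕ) :
    corec ht u hu ≫ π σ Y n = (τ ^ n : T ⟶ T) ≫ u :=
  lift_π _ _ _ n

theorem corec_π_zero (ht : τ ≫ t = t ≫ σ) (u : T ⟶ Y.left) (hu : u ≫ Y.hom = t) :
    corec ht u hu ≫ π σ Y 0 = u := by
  rw [corec_π, pow_zero, End.one_def, Category.id_comp]

theorem comp_corec (ht : τ ≫ t = t ≫ σ) (u : T ⟶ Y.left) (hu : u ≫ Y.hom = t) :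
    τ ≫ corec ht u hu = corec ht u hu ≫ shift σ Y := by
  refine hom_ext ?_ fun n => ?_
  · rw [Category.assoc, Category.assoc, corec_hom, shift_hom, ← Category.assoc, corec_hom, ht]
  · rw [Category.assoc, Category.assoc, corec_π, shift_π, corec_π, End.pow_succ_eq_comp,
      Category.assoc]

theorem eq_corec (ht : τ ≫ t = t ≫ σ) (u : T ⟶ Y.left) (hu : u ≫ Y.hom = t)
    {f : T ⟶ (cofree σ Y).left} (hf : τ ≫ f = f ≫ shift σ Y) (hf₀ : f ≫ π σ Y 0 = u) :
    f = corec ht u hu := by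
  refine hom_ext (by rw [corec_hom, ← hu, ← hf₀, Category.assoc, π_zero_comp_hom]) fun n => ?_
  rw [corec_π, ← shift_pow_π_zero, ← Category.assoc, ← End.pow_comp_eq_comp_pow hf,
    Category.assoc, hf₀]

end cofree

end Over

namespace DifferenceObject

abbrev forget (C : Type*) [Category C] : (SingleObj (Multiplicative ℕ) ⥤ C) ⥤ C :=
  (evaluation (SingleObj (Multiplicative ℕ)) C).obj (SingleObj.star _)

abbrev endo (X : SingleObj (Multiplicative ℕ) ⥤ C) : End ((forget C).obj X) :=
  X.map (Multiplicative.ofAdd 1)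

theorem map_eq_pow (X : SingleObj (Multiplicative ℕ) ⥤ C) (a : Multiplicative ℕ) :
    X.map (X := SingleObj.star _) (Y := SingleObj.star _) a = endo X ^ a.toAdd := by
  have := map_pow ((X.mapEnd (SingleObj.star _)).comp (SingleObj.toEnd _).toMonoidHom)
    (Multiplicative.ofAdd 1) a.toAdd
  simpa [← ofAdd_nsmul, SingleObj.toEnd_def] using this

theorem hom_ext {X Y : SingleObj (Multiplicative ℕ) ⥤ C} {f g : X ⟶ Y}
    (h : (forget C).map f = (forget C).map g) : f = g :=
  NatTrans.ext (funext fun _ => h)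

theorem endo_comp_map {X Y : SingleObj (Multiplicative ℕ) ⥤ C} (f : X ⟶ Y) :
    endo X ≫ (forget C).map f = (forget C).map f ≫ endo Y :=
  f.naturality _

def ofEndo {B : C} (σ : End B) : SingleObj (Multiplicative ℕ) ⥤ C :=
  SingleObj.functor (powersHom _ σ)

theorem endo_ofEndo {B : C} (σ : End B) : endo (ofEndo σ) = σ :=
  pow_one σ

def homMk {X Y : SingleObj (Multiplicative ℕ) ⥤ C} (f : (forget C).obj X ⟶ (forget C).obj Y)
    (hf : endo X ≫ f = f ≫ endo Y) : X ⟶ Y :=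
  SingleObj.natTrans f fun a => by
    rw [map_eq_pow, map_eq_pow, End.pow_comp_eq_comp_pow hf]

variable [HasPullbacks C] (S : SingleObj (Multiplicative ℕ) ⥤ C)
  [HasProductsOfShape ℕ (Over ((forget C).obj S))] (Y : Over ((forget C).obj S))

noncomputable def cofree : Over S :=
  Over.mk (homMk (X := ofEndo (Over.cofree.shift (endo S) Y)) (Y := S)
    (Over.cofree (endo S) Y).hom (by rw [endo_ofEndo]; exact Over.cofree.shift_hom (endo S) Y))

theorem endo_cofree_left : endo (cofree S Y).left = Over.cofree.shift (endo S) Y :=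
  endo_ofEndo _

noncomputable def counit : (Over.post (forget C)).obj (cofree S Y) ⟶ Y :=
  Over.homMk (Over.cofree.π (endo S) Y 0) (Over.cofree.π_zero_comp_hom (endo S) Y)

variable {S Y}

noncomputable def lift (X : Over S) (u : (Over.post (forget C)).obj X ⟶ Y) : X ⟶ cofree S Y :=
  Over.homMk
    (homMk (Over.cofree.corec (endo_comp_map X.hom) u.left (Over.w u))
      (by rw [endo_cofree_left]; exact Over.cofree.comp_corec _ _ _))
    (hom_ext (Over.cofree.corec_hom (endo_comp_map X.hom) u.left (Over.w u)))

theorem lift_counit (X : Over S) (u : (Over.post (forget C)).obj X ⟶ Y) :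
    (Over.post (forget C)).map (lift X u) ≫ counit S Y = u :=
  Over.OverMorphism.ext (Over.cofree.corec_π_zero (endo_comp_map X.hom) u.left (Over.w u))

theorem eq_lift (X : Over S) (u : (Over.post (forget C)).obj X ⟶ Y) (m : X ⟶ cofree S Y)
    (hm : (Over.post (forget C)).map m ≫ counit S Y = u) : m = lift X u :=
  Over.OverMorphism.ext <| hom_ext <|
    Over.cofree.eq_corec (endo_comp_map X.hom) u.left (Over.w u)
      (by rw [← endo_cofree_left]; exact endo_comp_map m.left) (congrArg CommaMorphism.left hm)

variable (S Y)

noncomputable def isTerminalCounit : IsTerminal (CostructuredArrow.mk (counit S Y)) :=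
  IsTerminal.ofUniqueHom
    (fun A => CostructuredArrow.homMk (lift A.left A.hom) (lift_counit _ _))
    (fun _ m => CostructuredArrow.hom_ext _ _ (eq_lift _ _ m.left (CostructuredArrow.w m)))

end DifferenceObject

end CategoryTheory

open CategoryTheory.DifferenceObject in
theorem difference_slice_forget_isLeftAdjoint {C : Type*} [Category C]
    [∀ X : C, Limits.HasCountableProducts (Over X)]
    (S : SingleObj (Multiplicative ℕ) ⥤ C) :
    (Over.post (X := S)
        ((evaluation (SingleObj (Multiplicative ℕ)) C).obj
          (SingleObj.star (Multiplicative ℕ)))).IsLeftAdjoint := by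
  have := hasPullbacks_of_hasBinaryProducts_over (C := C)
  exact isLeftAdjoint_iff_hasTerminal_costructuredArrow.mpr fun Y =>
    (isTerminalCounit S Y).hasTerminal
end

section
/- Let C be a category in which every coslice category has countable coproducts (equivalently, C has countable wide pushouts). Then for every difference object (S, σ_S) of σC, the functor from the coslice category of σC under (S, σ_S) to the coslice category of C under S induced by the forgetful functor |·| : σC ⥤ C admits a left adjoint. -/
/-!
An object `t : S ⟶ X` of the coslice under `(S, σ_S)` amounts to an object `t⋆ : S⋆ ⟶ X⋆` of
`Under S⋆` together with an endomorphism `β` of `X⋆` such that `σ_S ≫ t⋆ = t⋆ ≫ β`, that is, to a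
coalgebra for the endofunctor `Under.map σ_S` of `Under S⋆` (precomposition with `σ_S`). In a
coslice, binary coproducts are pushouts, so `Under.map σ_S` has the left adjoint
`Φ = Under.pushout σ_S`, and its coalgebras are the algebras for `Φ`. Being a left adjoint, `Φ`
preserves coproducts, so the free `Φ`-algebra on `A` is `∐ₙ Φⁿ A`, whose structure map
`Φ (∐ₙ Φⁿ A) ≅ ∐ₙ Φⁿ⁺¹ A ⟶ ∐ₙ Φⁿ A` shifts the summands.
-/

open CategoryTheory CategoryTheory.Limits

namespace CategoryTheory

theorem Limits.hasPushouts_of_hasBinaryCoproducts_under {C : Type*} [Category C]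
    [∀ X : C, HasBinaryCoproducts (Under X)] : HasPushouts C :=
  @hasPushouts_of_hasColimit_span _ _ fun {_ _ _ f g} =>
    ⟨⟨⟨_, IsColimit.pushoutCoconeEquivBinaryCofanInverse
      (colimit.isColimit (pair (Under.mk f) (Under.mk g)))⟩⟩⟩

theorem Limits.PreservesCoproduct.hom_ext {D E J : Type*} [Category D] [Category E]
    {F : D ⥤ E} {f : J → D} [HasCoproduct f] [PreservesColimit (Discrete.functor f) F]
    {W : E} {u v : F.obj (∐ f) ⟶ W}
    (h : ∀ j, F.map (Sigma.ι f j) ≫ u = F.map (Sigma.ι f j) ≫ v) : u = v :=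
  (isColimitOfPreserves F (coproductIsCoproduct f)).hom_ext fun ⟨j⟩ => h j

namespace Endofunctor.Algebra

variable {D : Type*} [Category D] (F : D ⥤ D)

-- Reducible, so that `rw` identifies `iterateObj F A (n + 1)` with `F.obj (iterateObj F A n)`.
@[reducible] def iterateObj (A : D) : ℕ → D
  | 0 => A
  | n + 1 => F.obj (iterateObj A n)

variable [HasCoproductsOfShape ℕ D] [PreservesColimitsOfShape (Discrete ℕ) F]

noncomputable abbrev free (A : D) : Algebra F where
  a := ∐ iterateObj F A
  str := inv (sigmaComparison F _) ≫ Limits.Sigma.desc fun n => Sigma.ι (iterateObj F A) (n + 1)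

lemma map_ι_free_str (A : D) (n : ℕ) :
    F.map (Sigma.ι (iterateObj F A) n) ≫ (free F A).str = Sigma.ι (iterateObj F A) (n + 1) := by
  simp only [map_ι_comp_inv_sigmaComparison_assoc, Limits.Sigma.ι_desc]

variable {F} {A : D} {X : Algebra F}

def liftIterate (g : A ⟶ X.a) : (n : ℕ) → iterateObj F A n ⟶ X.a
  | 0 => g
  | n + 1 => F.map (liftIterate g n) ≫ X.str

noncomputable def freeDesc (g : A ⟶ X.a) : free F A ⟶ X where
  f := Limits.Sigma.desc (liftIterate g)
  h := PreservesCoproduct.hom_ext fun n => by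
    rw [← F.map_comp_assoc, Limits.Sigma.ι_desc, ← Category.assoc, map_ι_free_str,
      Limits.Sigma.ι_desc]
    rfl

lemma ι_comp_f_eq_liftIterate (h : free F A ⟶ X) (n : ℕ) :
    Sigma.ι _ n ≫ h.f = liftIterate (Sigma.ι (iterateObj F A) 0 ≫ h.f : A ⟶ X.a) n := by
  induction n with
  | zero => rfl
  | succ n ih =>
    calc Sigma.ι _ (n + 1) ≫ h.f = F.map (Sigma.ι _ n) ≫ (free F A).str ≫ h.f := by
          rw [← Category.assoc, map_ι_free_str]
      _ = F.map (Sigma.ι _ n ≫ h.f) ≫ X.str := by rw [← h.h, F.map_comp_assoc]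
      _ = _ := by rw [ih]; rfl

variable (F) in
noncomputable def freeHomEquiv (A : D) (X : Algebra F) : (free F A ⟶ X) ≃ (A ⟶ X.a) where
  toFun h := Sigma.ι (iterateObj F A) 0 ≫ h.f
  invFun := freeDesc
  left_inv h := ext <| Limits.Sigma.hom_ext _ _ fun n => by
    simp [freeDesc, ι_comp_f_eq_liftIterate h n]
  right_inv g := Limits.Sigma.ι_desc (liftIterate g) 0

instance isRightAdjoint_forget : (forget F).IsRightAdjoint :=
  ⟨_, ⟨Adjunction.adjunctionOfEquivLeft (freeHomEquiv F) fun _ _ _ _ _ => by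
    exact (Category.assoc _ _ _).symm⟩⟩

end Endofunctor.Algebra

instance Endofunctor.Coalgebra.isRightAdjoint_forget {D : Type*} [Category D]
    [HasCoproductsOfShape ℕ D] (G : D ⥤ D) [G.IsRightAdjoint] :
    (Coalgebra.forget G).IsRightAdjoint :=
  inferInstanceAs ((Adjunction.algebraCoalgebraEquiv (Adjunction.ofIsRightAdjoint G)).inverse ⋙
    Algebra.forget _).IsRightAdjoint

namespace SingleObj

variable {C : Type*} [Category C]

abbrev shift : star (Multiplicative ℕ) ⟶ star (Multiplicative ℕ) := Multiplicative.ofAdd 1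

lemma map_comp_eq_comp_map_of_shift {F G : SingleObj (Multiplicative ℕ) ⥤ C}
    {u : F.obj (star _) ⟶ G.obj (star _)} (h : F.map shift ≫ u = u ≫ G.map shift)
    (a : Multiplicative ℕ) : F.map a ≫ u = u ≫ G.map a := by
  induction a using Multiplicative.rec with | ofAdd n => ?_
  induction n with
  | zero => change F.map (𝟙 _) ≫ u = u ≫ G.map (𝟙 _); simp
  | succ n ih =>
    have hsucc : (Multiplicative.ofAdd (n + 1) : star (Multiplicative ℕ) ⟶ _) =
        shift ≫ (show star (Multiplicative ℕ) ⟶ star _ from .ofAdd n) := by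
      rw [comp_as_mul, ← ofAdd_add]
    rw [hsucc, F.map_comp, G.map_comp, Category.assoc, ih, reassoc_of% h]

def natTransOfShift {F G : SingleObj (Multiplicative ℕ) ⥤ C} (u : F.obj (star _) ⟶ G.obj (star _))
    (h : F.map shift ≫ u = u ≫ G.map shift) : F ⟶ G :=
  natTrans u (map_comp_eq_comp_map_of_shift h)

lemma functor_powersHom_map_shift {X : C} (f : X ⟶ X) :
    (functor (powersHom (End X) f)).map shift = f :=
  pow_one (M := End X) f

end SingleObj

namespace DifferenceObject

open SingleObj Endofunctor

variable {C : Type*} [Category C] (S : SingleObj (Multiplicative ℕ) ⥤ C)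

def underToCoalgebra : Under S ⥤ Coalgebra (Under.map (S.map shift)) where
  obj B := ⟨Under.mk (B.hom.app (star _)),
    Under.homMk (B.right.map shift) (B.hom.naturality shift).symm⟩
  map f := ⟨Under.homMk (f.right.app (star _)) (congr_app (Under.w f) (star _)),
    by ext; exact f.right.naturality shift⟩

instance : (underToCoalgebra S).Faithful where
  map_injective h :=
    Under.UnderMorphism.ext (NatTrans.ext (funext fun _ => congr_arg (·.f.right) h))

instance : (underToCoalgebra S).Full where
  map_surjective φ :=
    ⟨Under.homMk (natTransOfShift φ.f.right (congr_arg (·.right) φ.h))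
      (NatTrans.ext (funext fun _ => Under.w φ.f)), rfl⟩

def ofCoalgebra (V : Coalgebra (Under.map (S.map shift))) : Under S :=
  Under.mk (natTransOfShift (G := functor (powersHom (End V.V.right) V.str.right)) V.V.hom
    ((Under.w V.str).symm.trans (congrArg (V.V.hom ≫ ·) (functor_powersHom_map_shift _).symm)))

instance : (underToCoalgebra S).EssSurj where
  mem_essImage V := ⟨ofCoalgebra S V, ⟨Coalgebra.isoMk
    (Under.isoMk (Iso.refl V.V.right) (Category.comp_id _))
    (Under.UnderMorphism.ext <| (Category.comp_id _).trans
      ((functor_powersHom_map_shift _).trans (Category.id_comp _).symm))⟩⟩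

instance : (underToCoalgebra S).IsEquivalence where

lemma under_post_evaluation_eq :
    Under.post (X := S) ((evaluation _ C).obj (star _)) =
      underToCoalgebra S ⋙ Coalgebra.forget _ :=
  rfl

end DifferenceObject

end CategoryTheory

theorem difference_coslice_forget_isRightAdjoint {C : Type*} [Category C]
    [∀ X : C, Limits.HasCountableCoproducts (Under X)]
    (S : SingleObj (Multiplicative ℕ) ⥤ C) :
    (Under.post (X := S)
        ((evaluation (SingleObj (Multiplicative ℕ)) C).obj
          (SingleObj.star (Multiplicative ℕ)))).IsRightAdjoint := by
  have := hasPushouts_of_hasBinaryCoproducts_under (C := C)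
  have : (Under.map (S.map SingleObj.shift)).IsRightAdjoint := ⟨_, ⟨Under.mapPushoutAdj _⟩⟩
  rw [DifferenceObject.under_post_evaluation_eq]
  infer_instance
end

section
/- Let k be a field, let k̄ be a separable closure of k (IsSepClosure k k̄), and let A and B be ind-étale commutative k-algebras. A k-algebra homomorphism f : A → B is injective if and only if the induced map of prime spectra Spec(k̄ ⊗_k B) → Spec(k̄ ⊗_k A) — the comap of the base-changed k̄-algebra homomorphism id_{k̄} ⊗ f : k̄ ⊗_k A → k̄ ⊗_k B — is surjective. -/
/-!
Let `kbar` be a separable closure of a field `k` and let `A`, `B` be ind-étale commutative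
`k`-algebras (every element is a root of a nonzero separable polynomial over `k`).
A `k`-algebra homomorphism `f : A → B` is injective if and only if the induced map
`Spec(kbar ⊗_k B) → Spec(kbar ⊗_k A)` on prime spectra is surjective.
-/

open TensorProduct

/-- A commutative `k`-algebra is ind-étale if every element is a root of a nonzero
separable polynomial with coefficients in `k`. -/
def IsIndEtale (k A : Type*) [Field k] [CommRing A] [Algebra k A] : Prop :=
  ∀ a : A, ∃ p : Polynomial k, p ≠ 0 ∧ p.Separable ∧ Polynomial.aeval a p = 0

/-!
Since `kbar` is flat over `k`, an injective `f` gives an injective `id ⊗ f`, and `kbar ⊗ B` is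
integral over `kbar ⊗ A` because `B` is algebraic over `k`; lying over then makes the map on
spectra surjective. Conversely, surjectivity on spectra puts the kernel of `id ⊗ f` into the
nilradical, so for `a ∈ ker f` the element `1 ⊗ a`, and hence `a` itself (as `A ↪ kbar ⊗ A`), is
nilpotent. Finally `A` is reduced: the kernel of `aeval a : k[X] → A` contains a squarefree
polynomial, so it is a radical ideal, and it contains `X ^ n` whenever `a ^ n = 0`.
-/

open Polynomial in
theorem isReduced_of_forall_exists_squarefree {k A : Type*} [Field k] [CommRing A] [Algebra k A]
    (h : ∀ a : A, ∃ p : k[X], Squarefree p ∧ aeval a p = 0) : IsReduced A := by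
  refine ⟨fun a ⟨n, hn⟩ ↦ ?_⟩
  obtain ⟨p, hp, hpa⟩ := h a
  obtain ⟨q, hq⟩ := Submodule.IsPrincipal.principal (RingHom.ker (aeval a : k[X] →ₐ[k] A))
  have hmem : ∀ r : k[X], aeval a r = 0 ↔ q ∣ r := fun r ↦ by
    rw [← Ideal.mem_span_singleton, ← Ideal.submodule_span_eq, ← hq, RingHom.mem_ker]
  have hrad : IsRadical q := (hp.squarefree_of_dvd ((hmem p).mp hpa)).isRadical
  simpa using (hmem X).mpr (hrad n X ((hmem _).mp (by simpa using hn)))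

theorem IsIndEtale.isReduced {k A : Type*} [Field k] [CommRing A] [Algebra k A]
    (hA : IsIndEtale k A) : IsReduced A :=
  isReduced_of_forall_exists_squarefree fun a ↦
    (hA a).imp fun _ h ↦ ⟨h.2.1.squarefree, h.2.2⟩

theorem IsIndEtale.isIntegral {k A : Type*} [Field k] [CommRing A] [Algebra k A]
    (hA : IsIndEtale k A) : Algebra.IsIntegral k A :=
  have : Algebra.IsAlgebraic k A := ⟨fun a ↦ (hA a).imp fun _ h ↦ ⟨h.1, h.2.2⟩⟩
  inferInstance

theorem RingHom.ker_le_nilradical_of_surjective_comap {R S : Type*} [CommRing R] [CommRing S]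
    {g : R →+* S} (hg : Function.Surjective (PrimeSpectrum.comap g)) :
    RingHom.ker g ≤ nilradical R :=
  (PrimeSpectrum.denseRange_comap_iff_ker_le_nilRadical g).mp hg.denseRange

namespace Algebra.TensorProduct

variable {k K A B : Type*} [Field k] [CommRing K] [Algebra k K]
  [CommRing A] [Algebra k A] [CommRing B] [Algebra k B]

theorem surjective_comap_map_of_injective [Algebra.IsIntegral k B] {f : A →ₐ[k] B}
    (hf : Function.Injective f) :
    Function.Surjective (PrimeSpectrum.comap (map (AlgHom.id k K) f).toRingHom) := by
  have hinj : Function.Injective (map (AlgHom.id k K) f) :=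
    Module.Flat.lTensor_preserves_injective_linearMap f.toLinearMap hf
  have hint : (map (AlgHom.id k K) f).toRingHom.IsIntegral := by
    refine RingHom.IsIntegral.tower_top (algebraMap K (K ⊗[k] A)) _ ?_
    have hcomp : (map (AlgHom.id k K) f).toRingHom.comp (algebraMap K (K ⊗[k] A)) =
        algebraMap K (K ⊗[k] B) := by
      ext; simp [algebraMap_apply]
    rw [hcomp]
    exact Algebra.IsIntegral.isIntegral
  exact hint.comap_surjective hinj

theorem injective_of_surjective_comap_map [Nontrivial K] [IsReduced A] {f : A →ₐ[k] B}
    (hf : Function.Surjective (PrimeSpectrum.comap (map (AlgHom.id k K) f).toRingHom)) :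
    Function.Injective f := by
  refine (injective_iff_map_eq_zero f).mpr fun a ha ↦ IsReduced.eq_zero a ?_
  have hker : (1 : K) ⊗ₜ[k] a ∈ RingHom.ker (map (AlgHom.id k K) f).toRingHom := by
    simp [ha]
  exact (IsNilpotent.map_iff (includeRight_injective (algebraMap k K).injective)).mp
    (RingHom.ker_le_nilradical_of_surjective_comap hf hker)

end Algebra.TensorProduct

theorem injective_iff_comap_surjective_general
    (k kbar A B : Type*) [Field k] [Field kbar] [Algebra k kbar]
    [CommRing A] [Algebra k A] [CommRing B] [Algebra k B]
    (hA : IsIndEtale k A) (hB : IsIndEtale k B) (f : A →ₐ[k] B) :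
    Function.Injective f ↔
      Function.Surjective
        (PrimeSpectrum.comap
          (Algebra.TensorProduct.map (AlgHom.id k kbar) f).toRingHom :
            PrimeSpectrum (kbar ⊗[k] B) → PrimeSpectrum (kbar ⊗[k] A)) :=
  have := hA.isReduced
  have := hB.isIntegral
  ⟨Algebra.TensorProduct.surjective_comap_map_of_injective,
    Algebra.TensorProduct.injective_of_surjective_comap_map⟩

theorem injective_iff_comap_surjective
    (k kbar A B : Type*) [Field k] [Field kbar] [Algebra k kbar] [IsSepClosure k kbar]
    [CommRing A] [Algebra k A] [CommRing B] [Algebra k B]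
    (hA : IsIndEtale k A) (hB : IsIndEtale k B) (f : A →ₐ[k] B) :
    Function.Injective f ↔
      Function.Surjective
        (PrimeSpectrum.comap
          (Algebra.TensorProduct.map (AlgHom.id k kbar) f).toRingHom :
            PrimeSpectrum (kbar ⊗[k] B) → PrimeSpectrum (kbar ⊗[k] A)) :=
  injective_iff_comap_surjective_general k kbar A B hA hB f
end

section
/- With (L, σ), k, a tuple a ∈ Lⁿ, the intermediate fields L_i, and the degrees d_i = [L_i : L_{i-1}] as in the context, the sequence (d_i)_{i≥1} is non-increasing: d_{i+1} ≤ d_i for every i ≥ 1. In particular, the sequence is eventually constant. -/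
/-!
The difference operator moves the tower one step up: `σ(L_i) ⊆ L_{i+1}`, and `L_{i+1}` is the
compositum of `L_i` and `σ(L_i)`. Adjoining to a field `E ⊇ F₀` an algebraic extension `F` of
`F₀` has degree at most `[F : F₀]`; with `E = L_{i+1}`, `F₀ = σ(L_i)` and `F = σ(L_{i+1})` this
gives `[L_{i+2} : L_{i+1}] ≤ [σ(L_{i+1}) : σ(L_i)] = [L_{i+1} : L_i]`. A non-increasing sequence
of natural numbers is eventually constant.
-/

open IntermediateField

namespace Subfield

variable {L : Type*} [Field L]

theorem relrank_sup_le_of_le {E F F₀ : Subfield L} (hE : F₀ ≤ E) (hF : F₀ ≤ F)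
    (halg : ∀ x ∈ F, IsAlgebraic F₀ x) :
    relrank E (E ⊔ F) ≤ relrank F₀ F := by
  let : Algebra F₀ E := (inclusion hE).toAlgebra
  have : IsScalarTower F₀ E L := IsScalarTower.of_algebraMap_eq' rfl
  have : Algebra.IsAlgebraic F₀ (extendScalars hF) :=
    ⟨fun x ↦ IntermediateField.isAlgebraic_iff.2 (halg x.1 x.2)⟩
  have hsup : extendScalars (le_sup_left : E ≤ E ⊔ F) = adjoin E (extendScalars hF : Set L) := by
    have hrange : Set.range (algebraMap E L) = E := Subtype.range_coe
    apply IntermediateField.toSubfield_injective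
    rw [extendScalars_toSubfield, adjoin_toSubfield, coe_extendScalars, hrange,
      closure_union, closure_eq, closure_eq]
  rw [relrank_eq_rank_of_le le_sup_left, relrank_eq_rank_of_le hF, hsup]
  exact adjoin_rank_le_of_isAlgebraic_right E (extendScalars hF)

theorem isAlgebraic_map_map (σ : L →+* L) {A : Subfield L} {x : L} (hx : IsAlgebraic A x) :
    IsAlgebraic (A.map σ) (σ x) :=
  hx.ringHom_of_comp_eq (A.equivMapOfInjective σ σ.injective) σ (RingEquiv.injective _) rfl

theorem relrank_sup_map_le (σ : L →+* L) {A B : Subfield L} (hAB : A ≤ B) (hmap : A.map σ ≤ B)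
    (halg : ∀ x ∈ B, IsAlgebraic A x) :
    relrank B (B ⊔ B.map σ) ≤ relrank A B := by
  have halg_map : ∀ x ∈ B.map σ, IsAlgebraic (A.map σ) x := by
    rintro _ ⟨y, hy, rfl⟩
    exact isAlgebraic_map_map σ (halg y hy)
  calc relrank B (B ⊔ B.map σ) ≤ relrank (A.map σ) (B.map σ) :=
        relrank_sup_le_of_le hmap ((gc_map_comap σ).monotone_l hAB) halg_map
    _ = relrank A B := relrank_map_map A B σ

end Subfield

theorem IntermediateField.relrank_lt_aleph0 {K L : Type*} [Field K] [Field L] [Algebra K L]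
    (A B : IntermediateField K L) [FiniteDimensional K B] : relrank A B < Cardinal.aleph0 :=
  (Cardinal.le_of_dvd rank_pos.ne' (relrank_dvd_rank_bot A B)).trans_lt (Module.rank_lt_aleph0 K B)

section DifferenceField

variable {L : Type*} [Field L] (σ : L →+* L) {n : ℕ} (a : Fin n → L)

def iterateGenerators (i : ℕ) : Set L := {x : L | ∃ m : Fin n, ∃ j ≤ i, x = (⇑σ)^[j] (a m)}

theorem iterateGenerators_succ (i : ℕ) :
    iterateGenerators σ a (i + 1) = iterateGenerators σ a i ∪ σ '' iterateGenerators σ a i := by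
  ext x
  constructor
  · rintro ⟨m, j, hj, rfl⟩
    cases j with
    | zero => exact .inl ⟨m, 0, i.zero_le, rfl⟩
    | succ j =>
      exact .inr ⟨_, ⟨m, j, Nat.le_of_succ_le_succ hj, rfl⟩,
        (Function.iterate_succ_apply' _ _ _).symm⟩
  · rintro (⟨m, j, hj, rfl⟩ | ⟨_, ⟨m, j, hj, rfl⟩, rfl⟩)
    · exact ⟨m, j, hj.trans i.le_succ, rfl⟩
    · exact ⟨m, j + 1, Nat.succ_le_succ hj, (Function.iterate_succ_apply' _ _ _).symm⟩

theorem iterateGenerators_finite (i : ℕ) : (iterateGenerators σ a i).Finite :=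
  (Set.finite_range fun p : Fin n × Fin (i + 1) ↦ (⇑σ)^[p.2] (a p.1)).subset
    fun _ ⟨m, j, hj, hx⟩ ↦ ⟨(m, ⟨j, Nat.lt_succ_of_le hj⟩), hx.symm⟩

variable {k : Type*} [Field k] [Algebra k L]

theorem toSubfield_adjoin_iterateGenerators_succ
    (hstable : σ '' Set.range (algebraMap k L) ⊆ Set.range (algebraMap k L)) (i : ℕ) :
    (adjoin k (iterateGenerators σ a (i + 1))).toSubfield =
      (adjoin k (iterateGenerators σ a i)).toSubfield ⊔
        (adjoin k (iterateGenerators σ a i)).toSubfield.map σ := by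
  rw [adjoin_toSubfield, adjoin_toSubfield, RingHom.map_field_closure, ← Subfield.closure_union,
    iterateGenerators_succ, Set.image_union, Set.union_union_union_comm,
    Set.union_eq_self_of_subset_right hstable]

variable [Algebra.IsAlgebraic k L]

instance finiteDimensional_adjoin_iterateGenerators (i : ℕ) :
    FiniteDimensional k (adjoin k (iterateGenerators σ a i)) :=
  have := (iterateGenerators_finite σ a i).to_subtype
  finiteDimensional_adjoin fun x _ ↦ (Algebra.IsAlgebraic.isAlgebraic x).isIntegral

theorem relrank_adjoin_iterateGenerators_succ_le
    (hstable : σ '' Set.range (algebraMap k L) ⊆ Set.range (algebraMap k L)) (i : ℕ) :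
    relrank (adjoin k (iterateGenerators σ a (i + 1))) (adjoin k (iterateGenerators σ a (i + 2)))
      ≤ relrank (adjoin k (iterateGenerators σ a i)) (adjoin k (iterateGenerators σ a (i + 1))) := by
  have hsucc := toSubfield_adjoin_iterateGenerators_succ σ a hstable i
  change Subfield.relrank _ _ ≤ Subfield.relrank _ _
  rw [toSubfield_adjoin_iterateGenerators_succ σ a hstable (i + 1)]
  refine Subfield.relrank_sup_map_le σ (hsucc ▸ le_sup_left) (hsucc ▸ le_sup_right) fun x _ ↦ ?_
  exact (Algebra.IsAlgebraic.isAlgebraic (R := k) x).tower_top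
    (adjoin k (iterateGenerators σ a i))

end DifferenceField

theorem limitDegree_antitone {k L : Type*} [Field k] [Field L] [Algebra k L]
    [Algebra.IsAlgebraic k L] (σ : L →+* L)
    (hstable : ∀ c : k, ∃ c' : k, σ (algebraMap k L c) = algebraMap k L c')
    {n : ℕ} (a : Fin n → L)
    (Li : ℕ → IntermediateField k L)
    (hLi : ∀ i, Li i =
      IntermediateField.adjoin k {x : L | ∃ m : Fin n, ∃ j ≤ i, x = (⇑σ)^[j] (a m)}) :
    (∀ i : ℕ, relfinrank (Li (i + 1)) (Li (i + 2)) ≤ relfinrank (Li i) (Li (i + 1))) ∧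
    ∃ N : ℕ, ∀ i ≥ N, relfinrank (Li i) (Li (i + 1)) = relfinrank (Li N) (Li (N + 1)) := by
  have hσk : σ '' Set.range (algebraMap k L) ⊆ Set.range (algebraMap k L) := by
    rintro _ ⟨_, ⟨c, rfl⟩, rfl⟩
    obtain ⟨c', hc'⟩ := hstable c
    exact ⟨c', hc'.symm⟩
  have hLi' : ∀ i, Li i = adjoin k (iterateGenerators σ a i) := hLi
  have hstep (i : ℕ) : relfinrank (Li (i + 1)) (Li (i + 2)) ≤ relfinrank (Li i) (Li (i + 1)) := by
    simp only [hLi']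
    exact Cardinal.toNat_le_toNat (relrank_adjoin_iterateGenerators_succ_le σ a hσk i)
      (relrank_lt_aleph0 _ _)
  obtain ⟨N, hN⟩ := WellFoundedLT.antitone_chain_condition <|
    antitone_nat_of_succ_le (f := fun i ↦ relfinrank (Li i) (Li (i + 1))) hstep
  exact ⟨hstep, N, fun i hi ↦ (hN i hi).symm⟩
end

section
/- Suppose a = (a₁, …, aₙ) ∈ Lⁿ and b = (b₁, …, b_m) ∈ L^m both σ-generate L over k, meaning that L is the union of the towers (L_i(a))_i and (L_i(b))_i determined by a and by b respectively. Then the eventual values of the non-increasing degree sequences ([L_i(a) : L_{i-1}(a)])_{i≥1} and ([L_i(b) : L_{i-1}(b)])_{i≥1} coincide; that is, the limit degree ld(L/k) does not depend on the choice of σ-generating tuple. -/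
/-!
If `a` and `b` both `σ`-generate `L`, the two towers interleave: since `σ` maps `L_i` into
`L_{i+1}`, every `L_i(a)` lies in `L_{i+r}(b)` and every `L_i(b)` in `L_{i+s}(a)` for fixed
shifts `r`, `s`. For `i` large, `L_i(a) ⊆ L_{i+r}(b) ⊆ L_{i+r+ℓ}(b) ⊆ L_{i+r+ℓ+s}(a)` and
multiplicativity of degrees give `db ^ ℓ ∣ da ^ (ℓ + r + s)` for every `ℓ`, which forces
`db ≤ da`; by symmetry `da = db`.
-/

open IntermediateField

theorem Nat.le_of_forall_pow_le_pow_add {a b c : ℕ} (ha : 0 < a)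
    (h : ∀ ℓ, b ^ ℓ ≤ a ^ (ℓ + c)) : b ≤ a := by
  by_contra! hab
  have ha' : (0 : ℝ) < a := by exact_mod_cast ha
  have hratio : 1 < (b : ℝ) / a := (one_lt_div ha').2 (by exact_mod_cast hab)
  obtain ⟨ℓ, hℓ⟩ := pow_unbounded_of_one_lt ((a : ℝ) ^ c) hratio
  rw [div_pow, lt_div_iff₀ (by positivity), ← pow_add, add_comm] at hℓ
  exact (h ℓ).not_gt (by exact_mod_cast hℓ)

namespace IntermediateField

variable {k L : Type*} [Field k] [Field L] [Algebra k L]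

theorem relfinrank_dvd_of_le_of_le {A B C D : IntermediateField k L}
    (hAB : A ≤ B) (hBC : B ≤ C) (hCD : C ≤ D) : relfinrank B C ∣ relfinrank A D := by
  rw [← relfinrank_mul_relfinrank hAB (hBC.trans hCD), ← relfinrank_mul_relfinrank hBC hCD]
  exact dvd_mul_of_dvd_right (dvd_mul_right _ _) _

section Tower

variable {F G : ℕ → IntermediateField k L} {d e N M : ℕ}

theorem relfinrank_add_eq_pow (hF : Monotone F)
    (hd : ∀ i ≥ N, relfinrank (F i) (F (i + 1)) = d) {i : ℕ} (hi : N ≤ i) (ℓ : ℕ) :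
    relfinrank (F i) (F (i + ℓ)) = d ^ ℓ := by
  induction ℓ with
  | zero => exact relfinrank_self _
  | succ ℓ ih =>
    rw [← add_assoc, ← relfinrank_mul_relfinrank (hF (Nat.le_add_right i ℓ))
      (hF (Nat.le_add_right (i + ℓ) 1)), ih, hd _ (hi.trans (Nat.le_add_right i ℓ)), pow_succ]

theorem pos_of_relfinrank_succ_eq [FiniteDimensional k (F (N + 1))]
    (hd : relfinrank (F N) (F (N + 1)) = d) : 0 < d :=
  hd ▸ Nat.pos_of_dvd_of_pos (relfinrank_dvd_finrank_bot (F N) (F (N + 1))) Module.finrank_pos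

theorem le_of_interleaved [∀ i, FiniteDimensional k (F i)] (hF : Monotone F)
    (hG : Monotone G) {r s : ℕ} (hFG : ∀ i, F i ≤ G (i + r)) (hGF : ∀ i, G i ≤ F (i + s))
    (hd : ∀ i ≥ N, relfinrank (F i) (F (i + 1)) = d)
    (he : ∀ i ≥ M, relfinrank (G i) (G (i + 1)) = e) : e ≤ d := by
  have hd_pos : 0 < d := pos_of_relfinrank_succ_eq (hd N le_rfl)
  set i := max N M
  have hdvd (ℓ : ℕ) : e ^ ℓ ∣ d ^ (ℓ + (r + s)) := by
    rw [← relfinrank_add_eq_pow hG he (by omega : M ≤ i + r) ℓ,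
      ← relfinrank_add_eq_pow hF hd (le_max_left N M) (ℓ + (r + s)),
      show i + (ℓ + (r + s)) = i + r + ℓ + s by omega]
    exact relfinrank_dvd_of_le_of_le (hFG i) (hG (Nat.le_add_right _ ℓ)) (hGF _)
  exact Nat.le_of_forall_pow_le_pow_add hd_pos
    fun ℓ => Nat.le_of_dvd (pow_pos hd_pos _) (hdvd ℓ)

end Tower

variable (k) in
/-- The field `L_i(a)`. -/
def sigmaTower {ι : Type*} (σ : L →+* L) (a : ι → L) (i : ℕ) : IntermediateField k L :=
  adjoin k {x : L | ∃ p : ι, ∃ j ≤ i, x = (⇑σ)^[j] (a p)}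

section SigmaTower

variable {ι : Type*} (σ : L →+* L) (a : ι → L)

theorem sigmaTower_mono : Monotone (sigmaTower k σ a) := by
  intro i i' h
  refine adjoin.mono _ _ _ ?_
  rintro x ⟨p, j, hj, rfl⟩
  exact ⟨p, j, hj.trans h, rfl⟩

theorem iterate_mem_sigmaTower {i j : ℕ} (hj : j ≤ i) (p : ι) :
    (⇑σ)^[j] (a p) ∈ sigmaTower k σ a i :=
  subset_adjoin _ _ ⟨p, j, hj, rfl⟩

instance [Finite ι] [Algebra.IsAlgebraic k L] (i : ℕ) :
    FiniteDimensional k (sigmaTower k σ a i) := by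
  have hfin : {x : L | ∃ p : ι, ∃ j ≤ i, x = (⇑σ)^[j] (a p)}.Finite := by
    refine (Set.finite_range fun pj : ι × Fin (i + 1) => (⇑σ)^[pj.2] (a pj.1)).subset ?_
    rintro x ⟨p, j, hj, rfl⟩
    exact ⟨(p, ⟨j, Nat.lt_succ_of_le hj⟩), rfl⟩
  have := hfin.to_subtype
  exact finiteDimensional_adjoin fun x _ => (Algebra.IsAlgebraic.isAlgebraic x).isIntegral

variable {σ}

theorem map_mem_sigmaTower_succ
    (hstable : ∀ c : k, ∃ c' : k, σ (algebraMap k L c) = algebraMap k L c')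
    {i : ℕ} {x : L} (hx : x ∈ sigmaTower k σ a i) :
    σ x ∈ sigmaTower k σ a (i + 1) := by
  -- `k` is `σ`-stable, so the preimage of `L_{i+1}(a)` under `σ` is again a field over `k`.
  let preimage : IntermediateField k L :=
    ((sigmaTower k σ a (i + 1)).toSubfield.comap σ).toIntermediateField fun c => by
      obtain ⟨c', hc'⟩ := hstable c
      rw [Subfield.mem_comap, hc']
      exact (sigmaTower k σ a (i + 1)).algebraMap_mem c'
  have hle : sigmaTower k σ a i ≤ preimage := by
    refine adjoin_le_iff.2 ?_
    rintro _ ⟨p, j, hj, rfl⟩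
    change σ ((⇑σ)^[j] (a p)) ∈ sigmaTower k σ a (i + 1)
    rw [← Function.iterate_succ_apply' σ j (a p)]
    exact iterate_mem_sigmaTower σ a (Nat.succ_le_succ hj) p
  exact hle hx

theorem iterate_mem_sigmaTower_add
    (hstable : ∀ c : k, ∃ c' : k, σ (algebraMap k L c) = algebraMap k L c') {i : ℕ} {x : L}
    (hx : x ∈ sigmaTower k σ a i) (j : ℕ) :
    (⇑σ)^[j] x ∈ sigmaTower k σ a (i + j) := by
  induction j with
  | zero => exact hx
  | succ j ih =>
    rw [Function.iterate_succ_apply']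
    exact map_mem_sigmaTower_succ a hstable ih

theorem exists_sigmaTower_le_sigmaTower_add [Finite ι]
    (hstable : ∀ c : k, ∃ c' : k, σ (algebraMap k L c) = algebraMap k L c')
    {κ : Type*} (b : κ → L) (hgen : ⨆ i, sigmaTower k σ b i = ⊤) :
    ∃ r, ∀ i, sigmaTower k σ a i ≤ sigmaTower k σ b (i + r) := by
  have hmono : Monotone (sigmaTower k σ b) := sigmaTower_mono σ b
  have hmem (p : ι) : ∃ r, a p ∈ sigmaTower k σ b r := by
    have hp : a p ∈ ⨆ i, sigmaTower k σ b i := hgen ▸ mem_top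
    rwa [← SetLike.mem_coe, coe_iSup_of_directed hmono.directed_le, Set.mem_iUnion] at hp
  choose r hr using hmem
  obtain ⟨R, hR⟩ := Finite.bddAbove_range r
  refine ⟨R, fun i => adjoin_le_iff.2 ?_⟩
  rintro _ ⟨p, j, hj, rfl⟩
  have hpR : a p ∈ sigmaTower k σ b R := hmono (hR ⟨p, rfl⟩) (hr p)
  exact hmono (by omega) (iterate_mem_sigmaTower_add b hstable hpR j)

end SigmaTower

end IntermediateField

theorem limitDegree_independent_of_generators {k L : Type*} [Field k] [Field L]
    [Algebra k L] [Algebra.IsAlgebraic k L] (σ : L →+* L)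
    (hstable : ∀ c : k, ∃ c' : k, σ (algebraMap k L c) = algebraMap k L c')
    {n m : ℕ} (a : Fin n → L) (b : Fin m → L)
    (LA LB : ℕ → IntermediateField k L)
    (hLA : ∀ i, LA i =
      IntermediateField.adjoin k {x : L | ∃ p : Fin n, ∃ j ≤ i, x = (⇑σ)^[j] (a p)})
    (hLB : ∀ i, LB i =
      IntermediateField.adjoin k {x : L | ∃ p : Fin m, ∃ j ≤ i, x = (⇑σ)^[j] (b p)})
    (hgenA : ⨆ i : ℕ, LA i = ⊤) (hgenB : ⨆ i : ℕ, LB i = ⊤)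
    (da db : ℕ)
    (hda : ∃ N : ℕ, ∀ i ≥ N, relfinrank (LA i) (LA (i + 1)) = da)
    (hdb : ∃ N : ℕ, ∀ i ≥ N, relfinrank (LB i) (LB (i + 1)) = db) :
    da = db := by
  obtain rfl : LA = sigmaTower k σ a := funext hLA
  obtain rfl : LB = sigmaTower k σ b := funext hLB
  obtain ⟨NA, hNA⟩ := hda
  obtain ⟨NB, hNB⟩ := hdb
  obtain ⟨r, hr⟩ := exists_sigmaTower_le_sigmaTower_add a hstable b hgenB
  obtain ⟨s, hs⟩ := exists_sigmaTower_le_sigmaTower_add b hstable a hgenA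
  exact le_antisymm (le_of_interleaved (sigmaTower_mono σ b) (sigmaTower_mono σ a) hs hr hNB hNA)
    (le_of_interleaved (sigmaTower_mono σ a) (sigmaTower_mono σ b) hr hs hNA hNB)
end

section
/- Let E₀ be a finite type, E : E₀ → E₀ → Prop a decidable relation, and f : E₀ ≃ E₀ a bijection such that E a b implies E (f a) (f b) for all a, b. Let T be the E₀ × E₀ integer matrix with T a b = 1 if E a b and T a b = 0 otherwise, and let F be the permutation matrix of f, i.e., F a b = 1 if a = f(b) and F a b = 0 otherwise. Then for every n ≥ 1 the set {x : ℕ → E₀ | (∀ i, E (x i) (x (i+1))) ∧ (∀ i, x (i+1) = f^[n] (x i))} is finite, and its cardinality equals the trace of the matrix T * F^n (equivalently, the number of a ∈ E₀ with E a (f^[n] a)). -/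
/-!
As `f` preserves `E`, so does `h := f^[n]`. A point `x` of the equalizer satisfies
`x (i + 1) = h (x i)`, so it is the `h`-orbit `i ↦ h^[i] a` of its first letter `a`, and such an
orbit lies in `X_E` iff its first edge `E a (h a)` does. Hence the equalizer is in bijection
with `{a | E a (h a)}`, whose size is `∑ a, T a (h a) = trace (T * Fⁿ)` because `Fⁿ` is the
matrix of `h`.
-/

namespace Matrix

variable {α R : Type*} [Fintype α] [DecidableEq α] [Semiring R]

theorem mul_of_eq_apply_apply (A : Matrix α α R) (g : α → α) (a b : α) :
    (A * of fun i j => if i = g j then (1 : R) else 0) a b = A a (g b) := by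
  simp [mul_apply]

theorem of_eq_apply_pow (g : α → α) (n : ℕ) :
    (of fun i j => if i = g j then (1 : R) else 0) ^ n
      = of fun i j => if i = g^[n] j then (1 : R) else 0 := by
  induction n with
  | zero => ext a b; rw [pow_zero, one_apply, of_apply, Function.iterate_zero_apply]
  | succ k ih =>
    ext a b
    rw [pow_succ, mul_of_eq_apply_apply, ih, of_apply, of_apply, Function.iterate_succ_apply]

theorem trace_mul_of_eq_apply (A : Matrix α α R) (g : α → α) :
    trace (A * of fun i j => if i = g j then (1 : R) else 0) = ∑ a, A a (g a) := by
  simp only [trace, diag, mul_of_eq_apply_apply]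

end Matrix

section Orbits

variable {α : Type*} (E : α → α → Prop) (h : α → α)

theorem rel_iterate_of_rel_map (hE : ∀ a b, E a b → E (h a) (h b)) (n : ℕ) {a b : α}
    (hab : E a b) : E (h^[n] a) (h^[n] b) := by
  induction n with
  | zero => exact hab
  | succ k ih => simpa only [Function.iterate_succ_apply'] using hE _ _ ih

theorem eq_iterate_of_apply_succ {x : ℕ → α} (hx : ∀ i, x (i + 1) = h (x i)) :
    x = fun i => h^[i] (x 0) := by
  funext i
  induction i with
  | zero => rfl
  | succ k ih => rw [hx, ih, Function.iterate_succ_apply']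

theorem bijOn_iterate_orbit (hE : ∀ a b, E a b → E (h a) (h b)) :
    Set.BijOn (fun a i => h^[i] a) {a | E a (h a)}
      {x | (∀ i, E (x i) (x (i + 1))) ∧ ∀ i, x (i + 1) = h (x i)} := by
  refine ⟨fun a ha => ⟨fun i => ?_, fun i => ?_⟩, fun a _ b _ hab => congrFun hab 0,
    fun x ⟨hchain, hx⟩ => ⟨x 0, ?_, (eq_iterate_of_apply_succ h hx).symm⟩⟩
  · simpa only [Function.iterate_succ_apply] using rel_iterate_of_rel_map E h hE i ha
  · exact Function.iterate_succ_apply' h i a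
  · simpa only [Set.mem_ofPred_eq, ← hx 0] using hchain 0

end Orbits

theorem sft_equalizer_card_eq_trace_general {E₀ : Type*} [Fintype E₀] [DecidableEq E₀]
    (E : E₀ → E₀ → Prop) [DecidableRel E] (f : E₀ ≃ E₀)
    (hf : ∀ a b, E a b → E (f a) (f b)) (n : ℕ) :
    {x : ℕ → E₀ | (∀ i, E (x i) (x (i + 1))) ∧ ∀ i, x (i + 1) = (⇑f)^[n] (x i)}.Finite ∧
    ({x : ℕ → E₀ | (∀ i, E (x i) (x (i + 1))) ∧ ∀ i, x (i + 1) = (⇑f)^[n] (x i)}.ncard : ℤ)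
      = Matrix.trace
          ((Matrix.of fun a b => if E a b then (1 : ℤ) else 0) *
            (Matrix.of fun a b => if a = f b then (1 : ℤ) else 0) ^ n) ∧
    {x : ℕ → E₀ | (∀ i, E (x i) (x (i + 1))) ∧ ∀ i, x (i + 1) = (⇑f)^[n] (x i)}.ncard
      = {a : E₀ | E a ((⇑f)^[n] a)}.ncard := by
  have hbij := bijOn_iterate_orbit E _ fun a b => rel_iterate_of_rel_map E f hf n
  refine ⟨hbij.finite_iff_finite.mp (Set.toFinite _), ?_, hbij.ncard_eq.symm⟩
  rw [← hbij.ncard_eq, Matrix.of_eq_apply_pow, Matrix.trace_mul_of_eq_apply]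
  simp [Finset.sum_boole, Set.ncard_eq_toFinset_card']

theorem sft_equalizer_card_eq_trace {E₀ : Type*} [Fintype E₀] [DecidableEq E₀]
    (E : E₀ → E₀ → Prop) [DecidableRel E] (f : E₀ ≃ E₀)
    (hf : ∀ a b, E a b → E (f a) (f b)) (n : ℕ) (hn : 1 ≤ n) :
    {x : ℕ → E₀ | (∀ i, E (x i) (x (i + 1))) ∧ ∀ i, x (i + 1) = (⇑f)^[n] (x i)}.Finite ∧
    ({x : ℕ → E₀ | (∀ i, E (x i) (x (i + 1))) ∧ ∀ i, x (i + 1) = (⇑f)^[n] (x i)}.ncard : ℤ)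
      = Matrix.trace
          ((Matrix.of fun a b => if E a b then (1 : ℤ) else 0) *
            (Matrix.of fun a b => if a = f b then (1 : ℤ) else 0) ^ n) ∧
    {x : ℕ → E₀ | (∀ i, E (x i) (x (i + 1))) ∧ ∀ i, x (i + 1) = (⇑f)^[n] (x i)}.ncard
      = {a : E₀ | E a ((⇑f)^[n] a)}.ncard :=
  sft_equalizer_card_eq_trace_general E f hf n
end

section
/- Let E₀ be a finite type, E : E₀ → E₀ → Prop a decidable relation, and f : E₀ ≃ E₀ a bijection such that E a b implies E (f a) (f b) for all a, b. For n ≥ 1 let N_n be the cardinality of the finite set {x : ℕ → E₀ | (∀ i, E (x i) (x (i+1))) ∧ (∀ i, x (i+1) = f^[n] (x i))}. Then the formal power series S(t) = Σ_{n≥0} N_{n+1} tⁿ over ℤ is rational; more precisely, there exist an integer m ≥ 1 and a polynomial p ∈ ℤ[t] such that (1 − t^m)·S(t) = p(t) in ℤ[[t]]. (This expresses that the difference zeta function Z(t) = exp(Σ_{n≥1} N_n tⁿ/n) is near-rational: its logarithmic derivative S is rational.) -/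
/-! A permutation `f` of a finite set has finite order `m`, so `f^[n]` and hence `N n` depend only
on `n` modulo `m`. Multiplying a power series with `m`-periodic coefficients by `1 - t^m` cancels
every coefficient beyond degree `m - 1`, leaving its truncation at degree `m`. -/

theorem PowerSeries.one_sub_X_pow_mul_mk_of_periodic {R : Type*} [Ring R] {a : ℕ → R} {m : ℕ}
    (ha : Function.Periodic a m) :
    (1 - X ^ m) * mk a = (trunc m (mk a) : PowerSeries R) := by
  ext k
  rw [sub_mul, one_mul, map_sub, coeff_X_pow_mul', Polynomial.coeff_coe, coeff_trunc]
  by_cases hk : m ≤ k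
  · have hshift : a (k - m) = a k := by simpa [Nat.sub_add_cancel hk] using (ha (k - m)).symm
    simp [hk, not_lt.mpr hk, hshift]
  · simp [hk, not_le.mp hk]

theorem Equiv.Perm.iterate_periodic {α : Type*} [Finite α] (f : Equiv.Perm α) :
    Function.Periodic (fun n => (⇑f)^[n]) (orderOf f) := fun n => by
  simp only [← Equiv.Perm.coe_pow, pow_add, pow_orderOf_eq_one, mul_one]

theorem diff_zeta_near_rational_general {E₀ : Type*} [Fintype E₀]
    (E : E₀ → E₀ → Prop) (f : E₀ ≃ E₀)
    (N : ℕ → ℕ)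
    (hN : ∀ n, 1 ≤ n → N n =
      {x : ℕ → E₀ | (∀ i, E (x i) (x (i + 1))) ∧ ∀ i, x (i + 1) = (⇑f)^[n] (x i)}.ncard) :
    ∃ (m : ℕ) (p : Polynomial ℤ), 1 ≤ m ∧
      (1 - (PowerSeries.X : PowerSeries ℤ) ^ m) *
          PowerSeries.mk (fun n => (N (n + 1) : ℤ)) = (p : PowerSeries ℤ) := by
  have hperiodic : Function.Periodic (fun n => (N (n + 1) : ℤ)) (orderOf f) := fun n => by
    have hiterate : (⇑f)^[n + orderOf f + 1] = (⇑f)^[n + 1] := by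
      rw [Nat.add_right_comm]; exact Equiv.Perm.iterate_periodic f (n + 1)
    show (N (n + orderOf f + 1) : ℤ) = N (n + 1)
    rw [hN _ (n + orderOf f).succ_pos, hN _ n.succ_pos, hiterate]
  exact ⟨orderOf f, _, orderOf_pos f,
    PowerSeries.one_sub_X_pow_mul_mk_of_periodic hperiodic⟩

theorem diff_zeta_near_rational {E₀ : Type*} [Fintype E₀] [DecidableEq E₀]
    (E : E₀ → E₀ → Prop) [DecidableRel E] (f : E₀ ≃ E₀)
    (hf : ∀ a b, E a b → E (f a) (f b)) (N : ℕ → ℕ)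
    (hN : ∀ n, 1 ≤ n → N n =
      {x : ℕ → E₀ | (∀ i, E (x i) (x (i + 1))) ∧ ∀ i, x (i + 1) = (⇑f)^[n] (x i)}.ncard) :
    ∃ (m : ℕ) (p : Polynomial ℤ), 1 ≤ m ∧
      (1 - (PowerSeries.X : PowerSeries ℤ) ^ m) *
          PowerSeries.mk (fun n => (N (n + 1) : ℤ)) = (p : PowerSeries ℤ) :=
  diff_zeta_near_rational_general E f N hN
end

section
/- Let E₀ be a finite type, E : E₀ → E₀ → Prop an edge relation, and X_E the associated subshift of finite type with shift σ. Equip X_E with the σ-topology, whose closed sets are exactly the subsets C ⊆ X_E that are closed in the subspace topology (inherited from the product topology on ℕ → E₀ with E₀ discrete) and satisfy σ(C) ⊆ C (equivalently, whose open sets are the open U with σ⁻¹(U) ⊆ U). Then X_E has only finitely many connected components with respect to the σ-topology. -/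
/-!
A subshift of finite type `X_E` over a finite alphabet `E₀`, equipped with the
`σ`-topology — whose open sets are the sets that are open in the subspace topology
(inherited from the product topology on `ℕ → E₀` with `E₀` discrete) and stable under
preimage by the shift `σ` (equivalently, whose closed sets are the closed `C` with
`σ(C) ⊆ C`) — has only finitely many connected components.
-/

/-- The subshift of finite type associated to the edge relation `E`. -/
def SFT (E₀ : Type*) (E : E₀ → E₀ → Prop) : Type _ :=
  {x : ℕ → E₀ // ∀ i, E (x i) (x (i + 1))}

/-- The shift map on a subshift of finite type. -/
def SFT.shift {E₀ : Type*} {E : E₀ → E₀ → Prop} (x : SFT E₀ E) : SFT E₀ E :=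
  ⟨fun i => x.1 (i + 1), fun i => x.2 (i + 1)⟩

/-- The subspace topology on `X_E ⊆ (ℕ → E₀)`, with `E₀` discrete. -/
def SFT.subspaceTopology (E₀ : Type*) (E : E₀ → E₀ → Prop) :
    TopologicalSpace (SFT E₀ E) :=
  TopologicalSpace.induced Subtype.val
    (@Pi.topologicalSpace ℕ (fun _ => E₀) (fun _ => ⊥))

/-- The `σ`-topology on `X_E`: a set is open iff it is open in the subspace topology and
its preimage under the shift is contained in it (equivalently, closed sets are the
subspace-closed sets `C` with `σ(C) ⊆ C`). -/
def SFT.sigmaTopology (E₀ : Type*) (E : E₀ → E₀ → Prop) :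
    TopologicalSpace (SFT E₀ E) where
  IsOpen U := (SFT.subspaceTopology E₀ E).IsOpen U ∧ SFT.shift ⁻¹' U ⊆ U
  isOpen_univ := ⟨(SFT.subspaceTopology E₀ E).isOpen_univ, fun _ _ => trivial⟩
  isOpen_inter := fun U V hU hV =>
    ⟨(SFT.subspaceTopology E₀ E).isOpen_inter U V hU.1 hV.1,
      fun x hx => ⟨hU.2 hx.1, hV.2 hx.2⟩⟩
  isOpen_sUnion := fun S hS =>
    ⟨(SFT.subspaceTopology E₀ E).isOpen_sUnion S (fun t ht => (hS t ht).1),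
      fun x hx => by
        obtain ⟨t, ht, hxt⟩ := hx
        exact ⟨t, ht, (hS t ht).2 hxt⟩⟩

/-!
The shift maps every `σ`-closed set into itself, so each `σ`-connected component is
shift-invariant; it is also closed in the product topology. Splicing a prefix of `z` onto
`w` at a place `n` where `z n = w 0` gives a point whose `n`-th shift is `w`, hence a point
of the component of `w`; if `w 0` occurs infinitely often in `z`, these splices converge
to `z`, so `z` lies in that component too. By pigeonhole some letter `a` occurs infinitely
often in any `x`, and shifting `x` to an occurrence of `a` stays in its component. Hence
every component contains a point whose first letter recurs in it, and that first letter
determines the component, giving an injection into the finite alphabet.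
-/

open Filter Topology

namespace SFT

variable {E₀ : Type*} {E : E₀ → E₀ → Prop}

theorem iterate_shift_apply (n : ℕ) (x : SFT E₀ E) (i : ℕ) :
    (shift^[n] x).1 i = x.1 (i + n) := by
  induction n generalizing x with
  | zero => rfl
  | succ n ih => rw [Function.iterate_succ_apply, ih]; rfl

theorem subspaceTopology_le_sigmaTopology :
    subspaceTopology E₀ E ≤ sigmaTopology E₀ E :=
  TopologicalSpace.le_def.2 fun _ hU => hU.1

theorem shift_mem_of_isClosed {C : Set (SFT E₀ E)} (hC : IsClosed[sigmaTopology E₀ E] C)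
    {x : SFT E₀ E} (hx : x ∈ C) : shift x ∈ C :=
  by_contra fun h => hC.isOpen_compl.2 h hx

theorem iterate_shift_mem_connectedComponent (n : ℕ) (x : SFT E₀ E) :
    shift^[n] x ∈ @connectedComponent _ (sigmaTopology E₀ E) x := by
  let := sigmaTopology E₀ E
  induction n with
  | zero => exact mem_connectedComponent
  | succ n ih =>
    rw [Function.iterate_succ_apply']
    exact shift_mem_of_isClosed isClosed_connectedComponent ih

theorem tendsto_subspaceTopology_nhds_iff {ι : Type*} {l : Filter ι} {u : ι → SFT E₀ E}
    {z : SFT E₀ E} :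
    Tendsto u l (@nhds _ (subspaceTopology E₀ E) z) ↔ ∀ i, ∀ᶠ k in l, (u k).1 i = z.1 i := by
  let : TopologicalSpace E₀ := ⊥
  have : DiscreteTopology E₀ := ⟨rfl⟩
  rw [subspaceTopology, nhds_induced, tendsto_comap_iff, tendsto_pi_nhds]
  simp only [nhds_discrete, tendsto_pure, Function.comp_apply]

def splice (z w : SFT E₀ E) (n : ℕ) (hn : z.1 n = w.1 0) : SFT E₀ E :=
  ⟨fun i => if i < n then z.1 i else w.1 (i - n), fun i => by
    dsimp only
    rcases lt_trichotomy (i + 1) n with h | rfl | h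
    · rw [if_pos (by omega), if_pos h]
      exact z.2 i
    · rw [if_pos (by omega), if_neg (lt_irrefl _), Nat.sub_self, ← hn]
      exact z.2 i
    · rw [if_neg (by omega), if_neg (by omega), (by omega : i + 1 - n = i - n + 1)]
      exact w.2 (i - n)⟩

theorem splice_apply_of_lt {z w : SFT E₀ E} {n : ℕ} (hn : z.1 n = w.1 0) {i : ℕ}
    (hi : i < n) : (splice z w n hn).1 i = z.1 i :=
  if_pos hi

theorem iterate_shift_splice {z w : SFT E₀ E} {n : ℕ} (hn : z.1 n = w.1 0) :
    shift^[n] (splice z w n hn) = w := by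
  apply Subtype.ext
  funext i
  rw [iterate_shift_apply]
  exact (if_neg (by omega)).trans (congrArg w.1 (Nat.add_sub_cancel i n))

theorem mem_connectedComponent_of_frequently {z w : SFT E₀ E}
    (h : ∃ᶠ n in atTop, z.1 n = w.1 0) : z ∈ @connectedComponent _ (sigmaTopology E₀ E) w := by
  let := sigmaTopology E₀ E
  obtain ⟨φ, hφ, hzφ⟩ := extraction_of_frequently_atTop h
  have hsplice : ∀ k, splice z w (φ k) (hzφ k) ∈ connectedComponent w := fun k => by
    have hw := iterate_shift_mem_connectedComponent (φ k) (splice z w (φ k) (hzφ k))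
    rw [iterate_shift_splice] at hw
    exact connectedComponent_eq_iff_mem.1 (connectedComponent_eq hw)
  have hlim : Tendsto (fun k => splice z w (φ k) (hzφ k)) atTop
      (@nhds _ (subspaceTopology E₀ E) z) :=
    tendsto_subspaceTopology_nhds_iff.2 fun i =>
      (hφ.tendsto_atTop.eventually_gt_atTop i).mono fun k hk => splice_apply_of_lt _ hk
  exact @IsClosed.mem_of_tendsto _ (subspaceTopology E₀ E) _ _ _ _ _ _
    (isClosed_connectedComponent.mono subspaceTopology_le_sigmaTopology) hlim
    (.of_forall hsplice)

theorem exists_frequently_iterate_shift_eq_head [Finite E₀] (x : SFT E₀ E) :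
    ∃ n, ∃ᶠ m in atTop, (shift^[n] x).1 m = (shift^[n] x).1 0 := by
  obtain ⟨a, ha⟩ := Finite.exists_infinite_fiber x.1
  have hfreq : ∃ᶠ m in atTop, x.1 m = a :=
    Nat.frequently_atTop_iff_infinite.2 (Set.infinite_coe_iff.1 ha)
  obtain ⟨n, hn⟩ := hfreq.exists
  refine ⟨n, ?_⟩
  simp only [iterate_shift_apply, zero_add, hn]
  rw [← map_add_atTop_eq_nat n, frequently_map] at hfreq
  exact hfreq

end SFT

theorem sft_sigmaTopology_finite_connectedComponents
    (E₀ : Type*) [Finite E₀] (E : E₀ → E₀ → Prop) :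
    Finite (@ConnectedComponents (SFT E₀ E) (SFT.sigmaTopology E₀ E)) := by
  let := SFT.sigmaTopology E₀ E
  have hrep : ∀ c : ConnectedComponents (SFT E₀ E), ∃ z : SFT E₀ E,
      (∃ᶠ m in atTop, z.1 m = z.1 0) ∧ ConnectedComponents.mk z = c := by
    refine ConnectedComponents.surjective_coe.forall.2 fun x => ?_
    obtain ⟨n, hn⟩ := SFT.exists_frequently_iterate_shift_eq_head x
    exact ⟨_, hn, ConnectedComponents.coe_eq_coe'.2
      (SFT.iterate_shift_mem_connectedComponent n x)⟩
  choose rep hrec hrep using hrep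
  refine Finite.of_injective (fun c => (rep c).1 0) fun c c' h => ?_
  rw [← hrep c, ← hrep c', ConnectedComponents.coe_eq_coe']
  exact SFT.mem_connectedComponent_of_frequently ((hrec c).mono fun _ hm => hm.trans h)
end

section
/- Let (k, σ_k) ⊆ (L, σ_L) be difference fields (k a σ_L-stable subfield of L with σ_k the restriction of σ_L), with L algebraic over k, and suppose a = (a₁, …, aₙ) ∈ Lⁿ σ-generates L over k, i.e., L is generated as a k-algebra by {σ_L^i(a_m) : i ∈ ℕ, 1 ≤ m ≤ n}. Let ε : k{x₁, …, xₙ} → L be the morphism of difference k-algebras determined by ε(x_{m,i}) = σ_L^i(a_m), and let 𝔭 = ker ε. Then 𝔭 is a finitely generated difference ideal: there exists a finite subset B ⊆ 𝔭 such that 𝔭 equals the ideal generated by ⋃_{i∈ℕ} σ^i(B). (Hence every finitely σ-generated algebraic difference field extension is finitely σ-presented.) -/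
/-!
Let `K_M = k(σ^i a_m : i ≤ M)`, a finite extension of `k` because `L/k` is algebraic, and let
`R_M ⊆ k{x}` be the polynomials in the variables `x_{m,i}` with `i ≤ M`, so that
`ε(R_M) = K_M`. As `K_{M+2}` is spanned over `K_{M+1}` by `σ(K_{M+1})`, the image under `σ` of
a family spanning `K_{M+1}` over `K_M` spans `K_{M+2}` over `K_{M+1}`. Hence the degrees
`[K_{M+1} : K_M]` decrease, so they are constant from some `N` on, and from then on `σ` maps a
basis of `K_{M+1}/K_M` to a basis of `K_{M+2}/K_{M+1}`.

Let `B` be a finite generating set of the ideal `𝔭 ∩ R_{N+1}` of the noetherian ring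
`R_{N+1}`, and `𝔍` the difference ideal it generates. By induction on `M ≥ N`,
`𝔭 ∩ R_{M+1} ⊆ 𝔍`: modulo `σ(𝔭 ∩ R_{M+1})`, every `f ∈ R_{M+2}` is a combination
`∑ g_t σ(h_t)` with `g_t ∈ R_{M+1}` and `ε(h_t)` running through a basis of `K_{M+1}/K_M`.
If `f ∈ 𝔭`, then `∑ ε(g_t) σ(ε h_t) = 0`, and the linear independence of the `σ(ε h_t)` over
`K_{M+1}` gives `g_t ∈ 𝔭 ∩ R_{M+1} ⊆ 𝔍`.
-/

/-- The distinguished endomorphism of the difference polynomial ring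
`k{x₁, …, xₙ} = MvPolynomial (Fin n × ℕ) k`: it acts as `σk` on coefficients and sends the
variable `x_{m,i}` to `x_{m,i+1}`. -/
noncomputable def diffPolyShift (k : Type*) [CommRing k] (σk : k →+* k) (n : ℕ) :
    MvPolynomial (Fin n × ℕ) k →+* MvPolynomial (Fin n × ℕ) k :=
  MvPolynomial.eval₂Hom ((MvPolynomial.C : k →+* MvPolynomial (Fin n × ℕ) k).comp σk)
    (fun p => MvPolynomial.X (p.1, p.2 + 1))

/-- The evaluation morphism `ε : k{x₁, …, xₙ} → L` of difference `k`-algebras determined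
by `ε (x_{m,i}) = σ_L^i (a_m)`. -/
noncomputable def diffEval {k L : Type*} [CommRing k] [CommRing L] [Algebra k L]
    (σL : L →+* L) {n : ℕ} (a : Fin n → L) :
    MvPolynomial (Fin n × ℕ) k →ₐ[k] L :=
  MvPolynomial.aeval (fun p : Fin n × ℕ => (⇑σL)^[p.2] (a p.1))

open MvPolynomial Submodule

section RingEndomorphism

variable {A : Type*} [CommRing A] (σ : A →+* A)

theorem Ideal.span_iUnion_iterate_image_le {B : Set A} {I : Ideal A} (hB : B ⊆ I)
    (hI : ∀ x ∈ I, σ x ∈ I) : Ideal.span (⋃ i : ℕ, (⇑σ)^[i] '' B) ≤ I := by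
  refine Ideal.span_le.2 (Set.iUnion_subset fun i => ?_)
  rintro _ ⟨b, hb, rfl⟩
  induction i with
  | zero => exact hB hb
  | succ i ih => rw [Function.iterate_succ_apply']; exact hI _ ih

theorem Ideal.map_mem_span_iUnion_iterate_image (B : Set A) {x : A}
    (hx : x ∈ Ideal.span (⋃ i : ℕ, (⇑σ)^[i] '' B)) :
    σ x ∈ Ideal.span (⋃ i : ℕ, (⇑σ)^[i] '' B) := by
  have hσx := Ideal.mem_map_of_mem σ hx
  rw [Ideal.map_span] at hσx
  refine Ideal.span_mono ?_ hσx
  rintro _ ⟨_, hy, rfl⟩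
  obtain ⟨i, b, hb, rfl⟩ := Set.mem_iUnion.1 hy
  exact Set.mem_iUnion.2 ⟨i + 1, b, hb, Function.iterate_succ_apply' _ _ _⟩

theorem Subring.closure_union_image_subset_span_sup (S : Subring A) {ι : Type*} (h : ι → A)
    (hh : ∀ t, h t ∈ S) (J : Ideal A)
    (hσS : ∀ p ∈ S, σ p ∈ span S (Set.range (σ ∘ h)) ⊔ J.restrictScalars S) :
    (Subring.closure ((S : Set A) ∪ σ '' S) : Set A) ⊆
      ↑(span S (Set.range (σ ∘ h)) ⊔ J.restrictScalars S) := by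
  set N := span S (Set.range (σ ∘ h)) ⊔ J.restrictScalars S
  have hS_mul : ∀ q ∈ S, ∀ y ∈ N, q * y ∈ N := fun q hq y hy => N.smul_mem ⟨q, hq⟩ hy
  have hσS_mul : ∀ q ∈ S, ∀ y ∈ N, σ q * y ∈ N := by
    intro q hq y hy
    obtain ⟨z, hz, j, hj, rfl⟩ := mem_sup.1 hy
    clear hy
    rw [mul_add]
    refine add_mem ?_ (mem_sup_right (J.mul_mem_left _ hj))
    induction hz using span_induction with
    | mem x hx =>
      obtain ⟨t, rfl⟩ := hx
      simpa using hσS _ (mul_mem hq (hh t))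
    | zero => simp
    | add x y _ _ hx hy => rw [mul_add]; exact add_mem hx hy
    | smul s x _ hx => rw [mul_smul_comm]; exact N.smul_mem s hx
  have hone : (1 : A) ∈ N := by simpa using hσS 1 (one_mem S)
  intro f hf
  suffices ∀ y ∈ N, f * y ∈ N by simpa only [mul_one, SetLike.mem_coe] using this 1 hone
  induction hf using Subring.closure_induction with
  | mem x hx =>
    rcases hx with hx | ⟨q, hq, rfl⟩
    exacts [hS_mul x hx, hσS_mul q hq]
  | zero => simp
  | one => simp
  | add x y _ _ hx hy => intro z hz; rw [add_mul]; exact add_mem (hx z hz) (hy z hz)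
  | neg x _ hx => intro z hz; rw [neg_mul]; exact neg_mem (hx z hz)
  | mul x y _ _ hx hy => intro z hz; rw [mul_assoc]; exact hx _ (hy z hz)

end RingEndomorphism

theorem Subalgebra.FG.exists_finset_subset_inter_span {R A : Type*} [CommRing R]
    [IsNoetherianRing R] [CommRing A] [Algebra R A] {S : Subalgebra R A} (hS : S.FG)
    (I : Ideal A) :
    ∃ B : Finset A, (B : Set A) ⊆ S ∩ I ∧ (S : Set A) ∩ I ⊆ Ideal.span (B : Set A) := by
  have : Algebra.FiniteType R S := (Subalgebra.fg_iff_finiteType S).1 hS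
  have : IsNoetherianRing S := Algebra.FiniteType.isNoetherianRing R S
  obtain ⟨G, hG⟩ := IsNoetherian.noetherian (I.comap S.val)
  refine ⟨G.map (Function.Embedding.subtype _), ?_, ?_⟩
  · intro x hx
    obtain ⟨g, hg, rfl⟩ := Finset.mem_map.1 hx
    have hgI : g ∈ I.comap S.val := hG ▸ Ideal.subset_span hg
    exact ⟨g.2, hgI⟩
  · rintro x ⟨hxS, hxI⟩
    have hx : (⟨x, hxS⟩ : S) ∈ I.comap S.val := hxI
    rw [← hG] at hx
    simpa [Ideal.map_span] using Ideal.mem_map_of_mem S.val hx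

theorem Set.finite_setOf_snd_le {ι : Type*} [Finite ι] (M : ℕ) :
    {p : ι × ℕ | p.2 ≤ M}.Finite :=
  (Set.finite_univ.prod (Set.finite_Iic M)).subset fun _ hp => ⟨trivial, hp⟩

section DiffPoly

variable {k : Type*} [CommRing k] {n : ℕ}

@[simp]
theorem diffPolyShift_C (σk : k →+* k) (c : k) :
    diffPolyShift k σk n (C c) = C (σk c) := by
  simp [diffPolyShift]

@[simp]
theorem diffPolyShift_X (σk : k →+* k) (p : Fin n × ℕ) :
    diffPolyShift k σk n (X p) = X (p.1, p.2 + 1) := by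
  simp [diffPolyShift]

variable (k n) in
noncomputable def diffPolyOrderLE (M : ℕ) : Subalgebra k (MvPolynomial (Fin n × ℕ) k) :=
  supported k {p | p.2 ≤ M}

theorem diffPolyOrderLE_mono : Monotone (diffPolyOrderLE k n) :=
  fun _ _ h => supported_mono fun _ hp => le_trans hp h

theorem diffPolyOrderLE_fg (M : ℕ) : (diffPolyOrderLE k n M).FG :=
  Subalgebra.fg_def.2
    ⟨_, (Set.finite_setOf_snd_le M).image X, (supported_eq_adjoin_X _).symm⟩

theorem exists_mem_diffPolyOrderLE (f : MvPolynomial (Fin n × ℕ) k) :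
    ∃ M, f ∈ diffPolyOrderLE k n M :=
  ⟨f.vars.sup Prod.snd, mem_supported.2 fun _ hp => Finset.le_sup (f := Prod.snd) hp⟩

theorem diffPolyShift_mem_diffPolyOrderLE_succ [Nontrivial k] (σk : k →+* k) {M : ℕ}
    {f : MvPolynomial (Fin n × ℕ) k} (hf : f ∈ diffPolyOrderLE k n M) :
    diffPolyShift k σk n f ∈ diffPolyOrderLE k n (M + 1) := by
  rw [diffPolyOrderLE, supported_eq_adjoin_X] at hf
  induction hf using Algebra.adjoin_induction with
  | mem x hx =>
    obtain ⟨p, hp, rfl⟩ := hx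
    rw [diffPolyShift_X]
    exact X_mem_supported.2 (Nat.succ_le_succ hp)
  | algebraMap c =>
    rw [algebraMap_eq, diffPolyShift_C]
    exact Subalgebra.algebraMap_mem _ _
  | add x y _ _ hx hy => rw [map_add]; exact add_mem hx hy
  | mul x y _ _ hx hy => rw [map_mul]; exact mul_mem hx hy

theorem diffPolyOrderLE_succ_subset_closure [Nontrivial k] (σk : k →+* k) (M : ℕ) :
    (diffPolyOrderLE k n (M + 1) : Set (MvPolynomial (Fin n × ℕ) k)) ⊆
      Subring.closure ((diffPolyOrderLE k n M : Set _) ∪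
        diffPolyShift k σk n '' diffPolyOrderLE k n M) := by
  intro f hf
  replace hf : f ∈ (Algebra.adjoin k (X '' {p : Fin n × ℕ | p.2 ≤ M + 1})).toSubring := by
    rwa [← supported_eq_adjoin_X]
  rw [Algebra.adjoin_eq_ring_closure] at hf
  refine Subring.closure_mono ?_ hf
  rintro _ (⟨c, rfl⟩ | ⟨⟨m, i⟩, hi, rfl⟩)
  · exact Or.inl (Subalgebra.algebraMap_mem _ c)
  · rcases i with _ | i
    · exact Or.inl (X_mem_supported.2 (Nat.zero_le M))
    · exact Or.inr
        ⟨X (m, i), X_mem_supported.2 (Nat.le_of_succ_le_succ hi), diffPolyShift_X _ _⟩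

end DiffPoly

section DiffEval

variable {k L : Type*} [CommRing k] [CommRing L] [Algebra k L] {n : ℕ}

@[simp]
theorem diffEval_X (σL : L →+* L) (a : Fin n → L)
    (p : Fin n × ℕ) :
    diffEval σL a (X p : MvPolynomial (Fin n × ℕ) k) = (⇑σL)^[p.2] (a p.1) :=
  aeval_X _ _

theorem diffEval_diffPolyShift {σk : k →+* k}
    {σL : L →+* L} (hcompat : ∀ c : k, σL (algebraMap k L c) = algebraMap k L (σk c))
    (a : Fin n → L) (f : MvPolynomial (Fin n × ℕ) k) :
    diffEval σL a (diffPolyShift k σk n f) = σL (diffEval σL a f) := by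
  suffices (diffEval σL a).toRingHom.comp (diffPolyShift k σk n) =
      σL.comp (diffEval σL a).toRingHom from RingHom.congr_fun this f
  refine ringHom_ext (fun c => ?_) fun p => ?_
  · simp [hcompat, diffEval]
  · simp [Function.iterate_succ_apply']

theorem diffPolyShift_mem_ker_diffEval {σk : k →+* k} {σL : L →+* L}
    (hcompat : ∀ c : k, σL (algebraMap k L c) = algebraMap k L (σk c)) (a : Fin n → L)
    {f : MvPolynomial (Fin n × ℕ) k} (hf : f ∈ RingHom.ker (diffEval σL a)) :
    diffPolyShift k σk n f ∈ RingHom.ker (diffEval σL a) := by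
  rw [RingHom.mem_ker, diffEval_diffPolyShift hcompat, RingHom.mem_ker.1 hf, map_zero]

end DiffEval

theorem map_mem_span_image {k L : Type*} [Field k] [Field L] [Algebra k L] (σ : L →+* L)
    {F E : IntermediateField k L} (hσ : ∀ x ∈ F, σ x ∈ E) {s : Set L} {x : L}
    (hx : x ∈ span F s) : σ x ∈ span E (σ '' s) := by
  induction hx using span_induction with
  | mem y hy => exact subset_span ⟨y, hy, rfl⟩
  | zero => simp
  | add y z _ _ hy hz => rw [map_add]; exact add_mem hy hz
  | smul f y _ hy =>
    rw [show f • y = (f : L) * y from rfl, map_mul]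
    exact (span E (σ '' s)).smul_mem ⟨σ f, hσ f f.2⟩ hy

section SigmaAdjoin

variable {k L : Type*} [Field k] [Field L] [Algebra k L] (σL : L →+* L) {n : ℕ}
  (a : Fin n → L)

variable (k) in
def sigmaAdjoin (M : ℕ) : IntermediateField k L :=
  IntermediateField.adjoin k ((fun p : Fin n × ℕ => (⇑σL)^[p.2] (a p.1)) '' {p | p.2 ≤ M})

theorem diffPolyOrderLE_map_diffEval [Algebra.IsAlgebraic k L] (M : ℕ) :
    (diffPolyOrderLE k n M).map (diffEval σL a) = (sigmaAdjoin k σL a M).toSubalgebra := by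
  rw [diffPolyOrderLE, supported_eq_adjoin_X, AlgHom.map_adjoin, sigmaAdjoin,
    IntermediateField.adjoin_toSubalgebra_of_isAlgebraic
      fun x _ => Algebra.IsAlgebraic.isAlgebraic x, Set.image_image]
  simp

theorem exists_mem_diffPolyOrderLE_diffEval_eq [Algebra.IsAlgebraic k L] {M : ℕ} {x : L}
    (hx : x ∈ sigmaAdjoin k σL a M) : ∃ f ∈ diffPolyOrderLE k n M, diffEval σL a f = x := by
  rw [← IntermediateField.mem_toSubalgebra, ← diffPolyOrderLE_map_diffEval] at hx
  exact hx

theorem diffEval_mem_sigmaAdjoin [Algebra.IsAlgebraic k L] {M : ℕ}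
    {f : MvPolynomial (Fin n × ℕ) k} (hf : f ∈ diffPolyOrderLE k n M) :
    diffEval σL a f ∈ sigmaAdjoin k σL a M := by
  rw [← IntermediateField.mem_toSubalgebra, ← diffPolyOrderLE_map_diffEval]
  exact ⟨f, hf, rfl⟩

theorem sigmaAdjoin_mono : Monotone (sigmaAdjoin k σL a) :=
  fun _ _ h => IntermediateField.adjoin.mono _ _ _ (Set.image_mono fun _ hp => le_trans hp h)

theorem map_mem_sigmaAdjoin_succ [Algebra.IsAlgebraic k L] {σk : k →+* k}
    (hcompat : ∀ c : k, σL (algebraMap k L c) = algebraMap k L (σk c)) {M : ℕ} {x : L}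
    (hx : x ∈ sigmaAdjoin k σL a M) : σL x ∈ sigmaAdjoin k σL a (M + 1) := by
  obtain ⟨f, hf, rfl⟩ := exists_mem_diffPolyOrderLE_diffEval_eq σL a hx
  rw [← diffEval_diffPolyShift hcompat]
  exact diffEval_mem_sigmaAdjoin σL a (diffPolyShift_mem_diffPolyOrderLE_succ σk hf)

theorem sigmaAdjoin_succ_subset_span [Algebra.IsAlgebraic k L] (M : ℕ) :
    (sigmaAdjoin k σL a (M + 1) : Set L) ⊆
      span (sigmaAdjoin k σL a M) (σL '' sigmaAdjoin k σL a M) := by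
  set V := span (sigmaAdjoin k σL a M) (σL '' sigmaAdjoin k σL a M)
  set T := V.restrictScalars k
  have hone : (1 : L) ∈ T := subset_span ⟨1, one_mem _, map_one σL⟩
  have hmul : ∀ x y : L, x ∈ T → y ∈ T → x * y ∈ T := by
    intro x y hx hy
    show x * y ∈ V
    have hxy := mul_mem_mul (M := V) (N := V) hx hy
    rw [span_mul_span] at hxy
    refine span_le.2 ?_ hxy
    rintro _ ⟨_, ⟨u, hu, rfl⟩, _, ⟨v, hv, rfl⟩, rfl⟩
    exact subset_span ⟨u * v, mul_mem hu hv, map_mul σL u v⟩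
  have hgen : (sigmaAdjoin k σL a (M + 1)).toSubalgebra ≤ T.toSubalgebra hone hmul := by
    rw [sigmaAdjoin, IntermediateField.adjoin_toSubalgebra_of_isAlgebraic
      fun x _ => Algebra.IsAlgebraic.isAlgebraic x]
    refine Algebra.adjoin_le ?_
    rintro _ ⟨⟨m, i⟩, hi, rfl⟩
    show _ ∈ V
    rcases i with _ | i
    · have ha : a m ∈ sigmaAdjoin k σL a M :=
        IntermediateField.subset_adjoin _ _ ⟨(m, 0), Nat.zero_le M, rfl⟩
      simpa [Algebra.smul_def] using V.smul_mem (⟨a m, ha⟩ : sigmaAdjoin k σL a M) hone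
    · refine subset_span ⟨(⇑σL)^[i] (a m), ?_, (Function.iterate_succ_apply' _ _ _).symm⟩
      exact IntermediateField.subset_adjoin _ _ ⟨(m, i), Nat.le_of_succ_le_succ hi, rfl⟩
  exact fun x hx => hgen hx

theorem sigmaAdjoin_add_two_subset_span [Algebra.IsAlgebraic k L] {σk : k →+* k}
    (hcompat : ∀ c : k, σL (algebraMap k L c) = algebraMap k L (σk c)) {M : ℕ} {ι : Type*}
    {c : ι → L} (hc : (sigmaAdjoin k σL a (M + 1) : Set L) ⊆
      span (sigmaAdjoin k σL a M) (Set.range c)) :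
    (sigmaAdjoin k σL a (M + 2) : Set L) ⊆
      span (sigmaAdjoin k σL a (M + 1)) (Set.range (σL ∘ c)) := by
  refine (sigmaAdjoin_succ_subset_span σL a (M + 1)).trans (span_le.2 ?_)
  rintro _ ⟨y, hy, rfl⟩
  rw [Set.range_comp]
  exact map_mem_span_image σL (fun _ hx => map_mem_sigmaAdjoin_succ σL a hcompat hx) (hc hy)

variable (k) in
/-- `[K_{M+1} : K_M]`, as the `K_M`-dimension of the `K_M`-span of `K_{M+1}` in `L`. -/
noncomputable def sigmaDegree (M : ℕ) : ℕ :=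
  Module.finrank (sigmaAdjoin k σL a M) (span (sigmaAdjoin k σL a M)
    (sigmaAdjoin k σL a (M + 1) : Set L))

theorem finite_span_sigmaAdjoin_succ [Algebra.IsAlgebraic k L] (M : ℕ) :
    Module.Finite (sigmaAdjoin k σL a M)
      (span (sigmaAdjoin k σL a M) (sigmaAdjoin k σL a (M + 1) : Set L)) := by
  have : Finite ((fun p : Fin n × ℕ => (⇑σL)^[p.2] (a p.1)) '' {p | p.2 ≤ M + 1}) :=
    ((Set.finite_setOf_snd_le (M + 1)).image _).to_subtype
  have : FiniteDimensional k (sigmaAdjoin k σL a (M + 1)) :=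
    IntermediateField.finiteDimensional_adjoin fun x _ =>
      (Algebra.IsAlgebraic.isAlgebraic x).isIntegral
  obtain ⟨T, hT⟩ := (Submodule.fg_iff_finiteDimensional
    (Subalgebra.toSubmodule (sigmaAdjoin k σL a (M + 1)).toSubalgebra)).2 this
  have hK : (sigmaAdjoin k σL a (M + 1) : Set L) = span k (T : Set L) := by rw [hT]; rfl
  rw [hK, span_span_of_tower]
  exact Module.Finite.span_of_finite _ T.finite_toSet

theorem exists_sigmaAdjoin_succ_subset_span_range [Algebra.IsAlgebraic k L] (M : ℕ) :
    ∃ c : Fin (sigmaDegree k σL a M) → L, (∀ t, c t ∈ sigmaAdjoin k σL a (M + 1)) ∧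
      (sigmaAdjoin k σL a (M + 1) : Set L) ⊆ span (sigmaAdjoin k σL a M) (Set.range c) := by
  set V := span (sigmaAdjoin k σL a M) (sigmaAdjoin k σL a (M + 1) : Set L)
  have : Module.Finite (sigmaAdjoin k σL a M) V := finite_span_sigmaAdjoin_succ σL a M
  let b := Module.finBasis (sigmaAdjoin k σL a M) V
  refine ⟨fun t => b t, fun t => ?_, fun x hx => ?_⟩
  · suffices ∀ y ∈ V, y ∈ sigmaAdjoin k σL a (M + 1) from this _ (b t).2
    intro y hy
    induction hy using span_induction with
    | mem y hy => exact hy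
    | zero => exact zero_mem _
    | add y z _ _ hy hz => exact add_mem hy hz
    | smul f y _ hy => exact mul_mem (sigmaAdjoin_mono σL a M.le_succ f.2) hy
  · have hx' : (⟨x, subset_span hx⟩ : V) ∈ span (sigmaAdjoin k σL a M) (Set.range b) := by
      rw [b.span_eq]; trivial
    have hx'' := mem_map_of_mem (f := V.subtype) hx'
    rwa [map_span, ← Set.range_comp] at hx''

theorem sigmaDegree_succ_le [Algebra.IsAlgebraic k L] {σk : k →+* k}
    (hcompat : ∀ c : k, σL (algebraMap k L c) = algebraMap k L (σk c)) (M : ℕ) :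
    sigmaDegree k σL a (M + 1) ≤ sigmaDegree k σL a M := by
  obtain ⟨c, -, hc⟩ := exists_sigmaAdjoin_succ_subset_span_range (k := k) σL a M
  have : Module.Finite (sigmaAdjoin k σL a (M + 1))
      (span (sigmaAdjoin k σL a (M + 1)) (Set.range (σL ∘ c))) :=
    Module.Finite.span_of_finite _ (Set.finite_range _)
  calc sigmaDegree k σL a (M + 1)
      ≤ Module.finrank (sigmaAdjoin k σL a (M + 1))
          (span (sigmaAdjoin k σL a (M + 1)) (Set.range (σL ∘ c))) :=
        Submodule.finrank_mono (span_le.2 (sigmaAdjoin_add_two_subset_span σL a hcompat hc))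
    _ ≤ Fintype.card (Fin (sigmaDegree k σL a M)) := finrank_range_le_card _
    _ = sigmaDegree k σL a M := Fintype.card_fin _

theorem linearIndependent_comp_of_sigmaDegree_succ_eq [Algebra.IsAlgebraic k L]
    {σk : k →+* k} (hcompat : ∀ c : k, σL (algebraMap k L c) = algebraMap k L (σk c))
    {M : ℕ} (hdeg : sigmaDegree k σL a (M + 1) = sigmaDegree k σL a M)
    {c : Fin (sigmaDegree k σL a M) → L} (hc_mem : ∀ t, c t ∈ sigmaAdjoin k σL a (M + 1))
    (hc : (sigmaAdjoin k σL a (M + 1) : Set L) ⊆ span (sigmaAdjoin k σL a M) (Set.range c)) :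
    LinearIndependent (sigmaAdjoin k σL a (M + 1)) (σL ∘ c) := by
  have hspan : span (sigmaAdjoin k σL a (M + 1)) (Set.range (σL ∘ c)) =
      span (sigmaAdjoin k σL a (M + 1)) (sigmaAdjoin k σL a (M + 2) : Set L) :=
    le_antisymm
      (span_mono (Set.range_subset_iff.2 fun t =>
        map_mem_sigmaAdjoin_succ σL a hcompat (hc_mem t)))
      (span_le.2 (sigmaAdjoin_add_two_subset_span σL a hcompat hc))
  rw [linearIndependent_iff_card_eq_finrank_span, Fintype.card_fin, Set.finrank, hspan]
  exact hdeg.symm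

end SigmaAdjoin

section Kernel

variable {k L : Type*} [Field k] [Field L] [Algebra k L] [Algebra.IsAlgebraic k L]
  {σk : k →+* k} (σL : L →+* L) {n : ℕ} (a : Fin n → L)

theorem diffPolyShift_mem_span_sup {M : ℕ}
    {ι : Type*} [Fintype ι] {h : ι → MvPolynomial (Fin n × ℕ) k}
    (hh : ∀ t, h t ∈ diffPolyOrderLE k n (M + 1))
    (hspan : (sigmaAdjoin k σL a (M + 1) : Set L) ⊆
      span (sigmaAdjoin k σL a M) (Set.range (diffEval σL a ∘ h)))
    {J : Ideal (MvPolynomial (Fin n × ℕ) k)}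
    (hJ : ∀ q ∈ (diffPolyOrderLE k n (M + 1) : Set _) ∩ RingHom.ker (diffEval σL a (k := k)),
      diffPolyShift k σk n q ∈ J)
    {p : MvPolynomial (Fin n × ℕ) k} (hp : p ∈ diffPolyOrderLE k n (M + 1)) :
    diffPolyShift k σk n p ∈ span (diffPolyOrderLE k n (M + 1)).toSubring
      (Set.range (diffPolyShift k σk n ∘ h)) ⊔ J.restrictScalars _ := by
  obtain ⟨w, hw⟩ :=
    mem_span_range_iff_exists_fun _ |>.1 (hspan (diffEval_mem_sigmaAdjoin σL a hp))
  choose g hgR hge using fun t => exists_mem_diffPolyOrderLE_diffEval_eq σL a (w t).2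
  set q := p - ∑ t, g t * h t
  have hqR : q ∈ diffPolyOrderLE k n (M + 1) :=
    sub_mem hp (sum_mem fun t _ => mul_mem (diffPolyOrderLE_mono M.le_succ (hgR t)) (hh t))
  have hqker : q ∈ RingHom.ker (diffEval σL a) := by
    rw [RingHom.mem_ker, map_sub, map_sum, ← hw, sub_eq_zero]
    exact Finset.sum_congr rfl fun t _ => by rw [map_mul, hge]; rfl
  have hσp : diffPolyShift k σk n p =
      ∑ t, (⟨diffPolyShift k σk n (g t),
          diffPolyShift_mem_diffPolyOrderLE_succ σk (hgR t)⟩ :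
        (diffPolyOrderLE k n (M + 1)).toSubring) • diffPolyShift k σk n (h t) +
      diffPolyShift k σk n q := by
    simp only [q, map_sub, map_sum, map_mul]
    simp [Subring.smul_def]
  rw [hσp]
  exact add_mem (mem_sup_left (sum_mem fun t _ => smul_mem _ _ (subset_span ⟨t, rfl⟩)))
    (mem_sup_right (hJ q ⟨hqR, hqker⟩))

theorem ker_inter_diffPolyOrderLE_add_two_subset
    (hcompat : ∀ c : k, σL (algebraMap k L c) = algebraMap k L (σk c)) {M : ℕ}
    {ι : Type*} [Fintype ι] {c : ι → L} (hc_mem : ∀ t, c t ∈ sigmaAdjoin k σL a (M + 1))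
    (hc : (sigmaAdjoin k σL a (M + 1) : Set L) ⊆ span (sigmaAdjoin k σL a M) (Set.range c))
    (hind : LinearIndependent (sigmaAdjoin k σL a (M + 1)) (σL ∘ c))
    {I : Ideal (MvPolynomial (Fin n × ℕ) k)} (hI : I ≤ RingHom.ker (diffEval σL a))
    (hIσ : ∀ x ∈ I, diffPolyShift k σk n x ∈ I)
    (hIM : (diffPolyOrderLE k n (M + 1) : Set _) ∩ RingHom.ker (diffEval σL a (k := k)) ⊆
      (I : Set (MvPolynomial (Fin n × ℕ) k))) :
    (diffPolyOrderLE k n (M + 2) : Set _) ∩ RingHom.ker (diffEval σL a (k := k)) ⊆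
      (I : Set (MvPolynomial (Fin n × ℕ) k)) := by
  rintro f ⟨hfR, hfker⟩
  choose h hhR hhc using fun t => exists_mem_diffPolyOrderLE_diffEval_eq σL a (hc_mem t)
  have hdecomp := Subring.closure_union_image_subset_span_sup (diffPolyShift k σk n)
    (diffPolyOrderLE k n (M + 1)).toSubring h hhR I
    (fun p hp => diffPolyShift_mem_span_sup σL a hhR (by rwa [show diffEval σL a ∘ h = c from
      funext hhc]) (fun q hq => hIσ q (hIM hq)) hp)
    (diffPolyOrderLE_succ_subset_closure σk (M + 1) hfR)
  obtain ⟨y, hy, j, hj, rfl⟩ := mem_sup.1 hdecomp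
  obtain ⟨g, rfl⟩ := mem_span_range_iff_exists_fun _ |>.1 hy
  have hg : ∀ t, (g t : MvPolynomial (Fin n × ℕ) k) ∈ RingHom.ker (diffEval σL a) := by
    refine fun t => congrArg Subtype.val (Fintype.linearIndependent_iff.1 hind
      (fun t => ⟨diffEval σL a (g t : MvPolynomial (Fin n × ℕ) k),
        diffEval_mem_sigmaAdjoin σL a (g t).2⟩) ?_ t)
    have hsum : diffEval σL a _ = 0 := hfker
    rw [map_add, hI hj, add_zero, map_sum] at hsum
    rw [← hsum]
    refine Finset.sum_congr rfl fun t _ => ?_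
    simp only [Subring.smul_def, smul_eq_mul, map_mul, Function.comp_apply,
      diffEval_diffPolyShift hcompat, hhc]
    rfl
  exact add_mem (sum_mem fun t _ => I.mul_mem_right _ (hIM ⟨(g t).2, hg t⟩)) hj

end Kernel

theorem diff_field_ext_finitely_presented_general {k L : Type*} [Field k] [Field L]
    [Algebra k L] [Algebra.IsAlgebraic k L]
    (σk : k →+* k) (σL : L →+* L)
    (hcompat : ∀ c : k, σL (algebraMap k L c) = algebraMap k L (σk c))
    {n : ℕ} (a : Fin n → L) :
    ∃ B : Finset (MvPolynomial (Fin n × ℕ) k),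
      (B : Set (MvPolynomial (Fin n × ℕ) k)) ⊆ RingHom.ker (diffEval σL a (k := k)) ∧
      Ideal.span (⋃ i : ℕ, (⇑(diffPolyShift k σk n))^[i] ''
          (B : Set (MvPolynomial (Fin n × ℕ) k)))
        = RingHom.ker (diffEval σL a (k := k)) := by
  obtain ⟨N, hN⟩ := WellFoundedLT.antitone_chain_condition
    (antitone_nat_of_succ_le (sigmaDegree_succ_le σL a hcompat))
  obtain ⟨B, hB, hBspan⟩ := (diffPolyOrderLE_fg (N + 1)).exists_finset_subset_inter_span
    (RingHom.ker (diffEval σL a (k := k)))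
  set 𝔍 := Ideal.span (⋃ i : ℕ, (⇑(diffPolyShift k σk n))^[i] '' (B : Set _))
  have h𝔍 : 𝔍 ≤ RingHom.ker (diffEval σL a) := Ideal.span_iUnion_iterate_image_le _
    (fun _ hx => (hB hx).2) fun _ hx => diffPolyShift_mem_ker_diffEval hcompat a hx
  have hlevel : ∀ M, N ≤ M → (diffPolyOrderLE k n (M + 1) : Set _) ∩
      RingHom.ker (diffEval σL a (k := k)) ⊆ (𝔍 : Set (MvPolynomial (Fin n × ℕ) k)) := by
    intro M hM
    induction M, hM using Nat.le_induction with
    | base => exact hBspan.trans (Ideal.span_mono (Set.subset_iUnion_of_subset 0 (by simp)))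
    | succ M hM ih =>
      obtain ⟨c, hc_mem, hc⟩ := exists_sigmaAdjoin_succ_subset_span_range (k := k) σL a M
      have hdeg := (hN (M + 1) (hM.trans M.le_succ)).symm.trans (hN M hM)
      exact ker_inter_diffPolyOrderLE_add_two_subset σL a hcompat hc_mem hc
        (linearIndependent_comp_of_sigmaDegree_succ_eq σL a hcompat hdeg hc_mem hc) h𝔍
        (fun _ hx => Ideal.map_mem_span_iUnion_iterate_image _ _ hx) ih
  refine ⟨B, fun _ hx => (hB hx).2, le_antisymm h𝔍 fun f hf => ?_⟩
  obtain ⟨M, hM⟩ := exists_mem_diffPolyOrderLE f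
  exact hlevel (max M N) (le_max_right M N)
    ⟨diffPolyOrderLE_mono ((le_max_left M N).trans (max M N).le_succ) hM, hf⟩

theorem diff_field_ext_finitely_presented {k L : Type*} [Field k] [Field L]
    [Algebra k L] [Algebra.IsAlgebraic k L]
    (σk : k →+* k) (σL : L →+* L)
    (hcompat : ∀ c : k, σL (algebraMap k L c) = algebraMap k L (σk c))
    {n : ℕ} (a : Fin n → L)
    (hgen : Algebra.adjoin k {x : L | ∃ (m : Fin n) (i : ℕ), x = (⇑σL)^[i] (a m)} = ⊤) :
    ∃ B : Finset (MvPolynomial (Fin n × ℕ) k),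
      (B : Set (MvPolynomial (Fin n × ℕ) k)) ⊆ RingHom.ker (diffEval σL a (k := k)) ∧
      Ideal.span (⋃ i : ℕ, (⇑(diffPolyShift k σk n))^[i] ''
          (B : Set (MvPolynomial (Fin n × ℕ) k)))
        = RingHom.ker (diffEval σL a (k := k)) :=
  diff_field_ext_finitely_presented_general σk σL hcompat a
end
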